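/- arXiv:1504.01233 — 8 statements merged into one kernel-verified Lean document; each statement's English description precedes it below -/
import Mathlib

section
/- Let k be a field, p an odd prime, and t_1, ..., t_d distinct integers with 0 ≤ t_i ≤ p; let r_1 < r_2 < ... < r_d be the increasing enumeration of the set {t_1, ..., t_d}. Let A be a d×d upper triangular matrix over k[u] whose i-th diagonal entry is c_i·u^{t_i} with c_i ∈ k a nonzero constant, and whose (i,j)-entry x_{i,j} for i < j is a polynomial of degree strictly less than t_j. Suppose there exist matrices P and Q over k[[u]] such that: all entries of P lie in the subring k[[u^p]], P is invertible over k[[u]], Q is invertible over k[[u]], and A·P = Q·D where D is the diagonal matrix diag(u^{r_1}, ..., u^{r_d}). Then for all i < j: x_{i,j} = 0 if t_j < t_i, and x_{i,j} = y_{i,j}·u^{t_i} for some constant y_{i,j} ∈ k if t_j > t_i. -/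
/-!
Modulo `u ^ p` the factorisation `A · P = Q · D` only sees the constant term `P₀` of `P`, an
invertible scalar matrix, since the entries of `P` have no monomials in degrees `1, …, p - 1`.
So for `m < p`, writing `A_m` for the matrix of `m`-th coefficients of `A`, the entry `(i, j)`
of `A_m P₀` vanishes whenever `m < r j`. If `m ≠ t i`, the row `i` of `A_m` is supported on
the indices `l` with `m < t l` (triangularity and the degree bounds) and is killed by the
columns `j` of `P₀` with `m < r j`. As `r` rearranges `t`, the corresponding block of `P₀` is
square, and it is invertible: for `w` in its right kernel, `v = P₀ w` satisfies `A_m' v = 0`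
for all `m' ≤ m`, which forces `v = 0` by downward induction along the diagonal
`c l * u ^ t l`. Hence the only coefficient of `x i j` that can survive is that of `u ^ t i`.
-/

open Polynomial Matrix

theorem PowerSeries.coeff_mul_eq_coeff_mul_constantCoeff {R : Type*} [CommSemiring R]
    (f g : PowerSeries R) {m : ℕ} (hg : ∀ n, 0 < n → n ≤ m → coeff n g = 0) :
    coeff m (f * g) = coeff m f * constantCoeff g := by
  rw [coeff_mul, Finset.sum_eq_single (m, 0)]
  · simp
  · rintro ⟨a, b⟩ hab hne
    rw [Finset.HasAntidiagonal.mem_antidiagonal] at hab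
    have hb : 0 < b := Nat.pos_of_ne_zero fun hb => hne (by simp_all)
    rw [hg b hb (by omega), mul_zero]
  · simp

theorem Matrix.map_coeff_coe_mul {R ι κ μ : Type*} [CommSemiring R] [Fintype κ]
    (A : Matrix ι κ R[X]) (P : Matrix κ μ (PowerSeries R)) {m : ℕ}
    (hP : ∀ i j n, 0 < n → n ≤ m → PowerSeries.coeff n (P i j) = 0) :
    (A.map coeToPowerSeries.ringHom * P).map (PowerSeries.coeff m)
      = A.map (·.coeff m) * P.map PowerSeries.constantCoeff := by
  ext i j
  simp only [map_apply, mul_apply, map_sum, coeToPowerSeries.ringHom_apply,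
    PowerSeries.coeff_mul_eq_coeff_mul_constantCoeff _ _ (hP _ j), coeff_coe]

theorem Matrix.BlockTriangular.eq_zero_of_mulVec_apply_eq_zero {R ι : Type*} [Semiring R]
    [NoZeroDivisors R] [Fintype ι] [LinearOrder ι] {M : Matrix ι ι R}
    (hM : M.BlockTriangular id) (hdiag : ∀ i, M i i ≠ 0) {v : ι → R}
    (hv : ∀ i, v i ≠ 0 → (M *ᵥ v) i = 0) : v = 0 := by
  funext i
  induction i using WellFoundedGT.induction with
  | _ i ih =>
    by_contra hi
    have hMv := hv i hi
    rw [mulVec, dotProduct, Finset.sum_eq_single i] at hMv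
    · exact hi ((mul_eq_zero.mp hMv).resolve_left (hdiag i))
    · intro j _ hji
      rcases hji.lt_or_gt with h | h
      · rw [hM h, zero_mul]
      · rw [ih j h, Pi.zero_apply, mul_zero]
    · simp

theorem Fintype.sum_subtype_of_eq_zero {ι M : Type*} [Fintype ι] [AddCommMonoid M]
    {p : ι → Prop} [DecidablePred p] (f : ι → M) (hf : ∀ i, ¬ p i → f i = 0) :
    ∑ i : {i // p i}, f i = ∑ i, f i := by
  rw [← Fintype.sum_subtype_add_sum_subtype p f, Finset.sum_eq_zero (s := Finset.univ)
    (f := fun i : {i // ¬ p i} => f i) fun i _ => hf i i.2, add_zero]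

/-- If the square block `C[a, b]` has trivial right kernel, it has trivial left kernel. -/
theorem Matrix.eq_zero_of_vecMul_eq_zero_on {K ι κ : Type*} [Field K] [Fintype ι] [Fintype κ]
    (C : Matrix ι κ K) {a : ι → Prop} {b : κ → Prop}
    (e : {i // a i} ≃ {j // b j})
    (hC : ∀ w : κ → K, (∀ j, ¬ b j → w j = 0) → (∀ i, a i → (C *ᵥ w) i = 0) → w = 0)
    {α : ι → K} (hα : ∀ i, ¬ a i → α i = 0) (hαC : ∀ j, b j → (α ᵥ* C) j = 0) : α = 0 := by
  classical
  set M : Matrix {i // a i} {i // a i} K := C.submatrix Subtype.val fun i => (e i).val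
  have hM : M.det ≠ 0 := by
    rintro hdet
    obtain ⟨x, hx, hMx⟩ := exists_mulVec_eq_zero_iff.mpr hdet
    let w : κ → K := fun j => if h : b j then x (e.symm ⟨j, h⟩) else 0
    have hw : w = 0 := by
      refine hC w (fun j hj => dif_neg hj) fun i hi => ?_
      calc (C *ᵥ w) i = (M *ᵥ x) ⟨i, hi⟩ := by
            simp only [mulVec, dotProduct]
            rw [← Fintype.sum_subtype_of_eq_zero (p := b) _ fun j hj => by simp [w, hj]]
            exact Fintype.sum_equiv e.symm _ _ fun j => by simp [M, w, j.2]
        _ = 0 := congrFun hMx _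
    exact hx (funext fun i => by simpa [w, (e i).2] using congrFun hw (e i))
  have hαM : (fun i : {i // a i} => α i) ᵥ* M = 0 := by
    funext i
    refine Eq.trans ?_ (hαC _ (e i).2)
    simp only [vecMul, dotProduct]
    rw [← Fintype.sum_subtype_of_eq_zero (p := a) _ fun i hi => by simp [hα i hi]]
    rfl
  by_contra hne
  refine hM (exists_vecMul_eq_zero_iff.mp ⟨_, fun h => hne ?_, hαM⟩)
  funext i
  by_cases hi : a i
  · exact congrFun h ⟨i, hi⟩
  · exact hα i hi

theorem Polynomial.eq_C_mul_X_pow_of_coeff_eq_zero {R : Type*} [Semiring R] {f : R[X]} {n : ℕ}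
    (hf : ∀ m, m ≠ n → f.coeff m = 0) : f = C (f.coeff n) * X ^ n := by
  ext m
  rw [coeff_C_mul_X_pow]
  split_ifs with h
  · rw [h]
  · exact hf m h

namespace KisinReduction

variable {K ι : Type*} [Field K] [Fintype ι] [LinearOrder ι] {A : Matrix ι ι K[X]}
  {t r : ι → ℕ} {P₀ : Matrix ι ι K}

theorem eq_zero_of_mulVec_eq_zero_on (hA_lower : ∀ i j, j < i → A i j = 0)
    (hdiag : ∀ i, (A i i).coeff (t i) ≠ 0) (hP₀ : P₀.det ≠ 0) {n : ℕ}
    (hAP₀ : ∀ m ≤ n, ∀ i j, m < r j → (A.map (·.coeff m) * P₀) i j = 0) {w : ι → K}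
    (hw : ∀ j, ¬ n < r j → w j = 0) (hP₀w : ∀ l, n < t l → (P₀ *ᵥ w) l = 0) : w = 0 := by
  have hv : P₀ *ᵥ w = 0 := by
    refine Matrix.BlockTriangular.eq_zero_of_mulVec_apply_eq_zero (M := of fun i j =>
      (A i j).coeff (t i)) (fun i j hji => by simp [hA_lower i j hji]) hdiag fun l hl => ?_
    have htl : t l ≤ n := not_lt.mp fun h => hl (hP₀w l h)
    suffices ((A.map (·.coeff (t l)) * P₀) *ᵥ w) l = 0 by
      rwa [← mulVec_mulVec] at this
    simp only [mulVec, dotProduct]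
    refine Finset.sum_eq_zero fun j _ => ?_
    by_cases hj : n < r j
    · rw [hAP₀ _ htl l j (htl.trans_lt hj), zero_mul]
    · rw [hw j hj, mul_zero]
  by_contra hne
  exact hP₀ (exists_mulVec_eq_zero_iff.mp ⟨w, hne, hv⟩)

theorem coeff_eq_zero_of_lt_of_ne {c : ι → K} (hc : ∀ i, c i ≠ 0)
    (hA_lower : ∀ i j, j < i → A i j = 0) (hA_diag : ∀ i, A i i = C (c i) * X ^ t i)
    (hA_deg : ∀ i j, i < j → (A i j).degree < t j) {σ : Equiv.Perm ι} (hr : ∀ j, r j = t (σ j))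
    (hP₀ : P₀.det ≠ 0) {N : ℕ}
    (hAP₀ : ∀ m < N, ∀ i j, m < r j → (A.map (·.coeff m) * P₀) i j = 0) {i j : ι} {m : ℕ}
    (hmN : m < N) (hmi : m ≠ t i) : (A i j).coeff m = 0 := by
  have hdiag : ∀ i, (A i i).coeff (t i) ≠ 0 := fun i => by simp [hA_diag, hc]
  have hrow : (fun l => (A i l).coeff m) = 0 := by
    refine P₀.eq_zero_of_vecMul_eq_zero_on ((σ.subtypeEquiv fun j => by rw [hr]).symm)
      (fun w hw hP₀w => eq_zero_of_mulVec_eq_zero_on hA_lower hdiag hP₀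
        (fun m' hm' => hAP₀ m' (hm'.trans_lt hmN)) hw hP₀w) (fun l hl => ?_)
      fun j' hj' => hAP₀ m hmN i j' hj'
    rcases lt_trichotomy l i with h | rfl | h
    · simp [hA_lower i l h]
    · simp [hA_diag, hmi]
    · exact coeff_eq_zero_of_degree_lt ((hA_deg i l h).trans_le (by exact_mod_cast not_lt.mp hl))
  exact congrFun hrow j

end KisinReduction

theorem stmt1_general {k : Type*} [Field k] {p d : ℕ}
    (t : Fin d → ℕ) (ht_le : ∀ i, t i ≤ p)
    (r : Fin d → ℕ)
    (hr_enum : ∃ σ : Equiv.Perm (Fin d), ∀ i, r i = t (σ i))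
    (c : Fin d → k) (hc : ∀ i, c i ≠ 0)
    (A : Matrix (Fin d) (Fin d) (Polynomial k))
    (hA_lower : ∀ i j : Fin d, j < i → A i j = 0)
    (hA_diag : ∀ i : Fin d, A i i = Polynomial.C (c i) * Polynomial.X ^ (t i))
    (hA_deg : ∀ i j : Fin d, i < j → (A i j).degree < (t j : WithBot ℕ))
    (P Q : Matrix (Fin d) (Fin d) (PowerSeries k))
    (hPcoeff : ∀ i j : Fin d, ∀ n : ℕ, PowerSeries.coeff (R := k) n (P i j) ≠ 0 → p ∣ n)
    (hP : IsUnit P.det)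
    (hfact : A.map (Polynomial.coeToPowerSeries.ringHom) * P
        = Q * Matrix.diagonal (fun i => (PowerSeries.X : PowerSeries k) ^ (r i))) :
    ∀ i j : Fin d, i < j →
      (t j < t i → A i j = 0) ∧
      (t i < t j → ∃ y : k, A i j = Polynomial.C y * Polynomial.X ^ (t i)) := by
  intro i j hij
  obtain ⟨σ, hσ⟩ := hr_enum
  have hP₀ : (P.map PowerSeries.constantCoeff).det ≠ 0 := by
    have h := (hP.map PowerSeries.constantCoeff).ne_zero
    rwa [RingHom.map_det] at h
  have hAP₀ : ∀ m < p, ∀ i j, m < r j →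
      (A.map (·.coeff m) * P.map PowerSeries.constantCoeff) i j = 0 := by
    intro m hm i j hmj
    have hP0 : ∀ i j n, 0 < n → n ≤ m → PowerSeries.coeff n (P i j) = 0 := fun i j n hn hnm =>
      by_contra fun h => absurd (Nat.le_of_dvd hn (hPcoeff i j n h)) (by omega)
    rw [← Matrix.map_coeff_coe_mul A P hP0, Matrix.map_apply, hfact, Matrix.mul_diagonal,
      PowerSeries.coeff_mul_X_pow', if_neg (by omega)]
  have hlow : ∀ m, m < t j → m ≠ t i → (A i j).coeff m = 0 := fun m hmj hmi =>
    KisinReduction.coeff_eq_zero_of_lt_of_ne hc hA_lower hA_diag hA_deg hσ hP₀ hAP₀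
      (hmj.trans_le (ht_le j)) hmi
  have hhigh : ∀ m, t j ≤ m → (A i j).coeff m = 0 := fun m hm =>
    coeff_eq_zero_of_degree_lt ((hA_deg i j hij).trans_le (by exact_mod_cast hm))
  have hcoeff : ∀ m, m ≠ t i → (A i j).coeff m = 0 := fun m hmi =>
    (lt_or_ge m (t j)).elim (hlow m · hmi) (hhigh m)
  refine ⟨fun hji => ?_, fun _ => ⟨_, eq_C_mul_X_pow_of_coeff_eq_zero hcoeff⟩⟩
  ext m
  rcases eq_or_ne m (t i) with rfl | hmi
  · exact hhigh _ hji.le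
  · exact hcoeff m hmi

/-- matrix form of Proposition `shape` of the paper, at one embedding.
`A` is upper triangular over `k[u]` with `i`-th diagonal entry `c i * u ^ (t i)` and
off-diagonal degrees `< t j`; if `A · P = Q · diag(u^{r₁}, …, u^{r_d})` with `P` having
entries in `k[[u^p]]` and `P, Q` invertible over `k[[u]]`, then the off-diagonal entries
are as described. -/
theorem stmt1 {k : Type*} [Field k] {p d : ℕ} (hp : p.Prime) (hodd : Odd p)
    (t : Fin d → ℕ) (ht_inj : Function.Injective t) (ht_le : ∀ i, t i ≤ p)
    (r : Fin d → ℕ) (hr_mono : StrictMono r)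
    (hr_enum : ∃ σ : Equiv.Perm (Fin d), ∀ i, r i = t (σ i))
    (c : Fin d → k) (hc : ∀ i, c i ≠ 0)
    (A : Matrix (Fin d) (Fin d) (Polynomial k))
    (hA_lower : ∀ i j : Fin d, j < i → A i j = 0)
    (hA_diag : ∀ i : Fin d, A i i = Polynomial.C (c i) * Polynomial.X ^ (t i))
    (hA_deg : ∀ i j : Fin d, i < j → (A i j).degree < (t j : WithBot ℕ))
    (P Q : Matrix (Fin d) (Fin d) (PowerSeries k))
    (hPcoeff : ∀ i j : Fin d, ∀ n : ℕ, PowerSeries.coeff (R := k) n (P i j) ≠ 0 → p ∣ n)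
    (hP : IsUnit P.det) (hQ : IsUnit Q.det)
    (hfact : A.map (Polynomial.coeToPowerSeries.ringHom) * P
        = Q * Matrix.diagonal (fun i => (PowerSeries.X : PowerSeries k) ^ (r i))) :
    ∀ i j : Fin d, i < j →
      (t j < t i → A i j = 0) ∧
      (t i < t j → ∃ y : k, A i j = Polynomial.C y * Polynomial.X ^ (t i)) :=
  stmt1_general t ht_le r hr_enum c hc A hA_lower hA_diag hA_deg P Q hPcoeff hP hfact
end

section
/- Let k be a field and p an odd prime. Suppose M = B·D·A is an identity of d×d matrices over k[[u]], where: M is upper triangular with i-th diagonal entry c_i·u^{t_i} for some unit c_i ∈ k[[u]]^× and some nonnegative integer t_i; B is invertible over k[[u]]; D = diag(u^{r_1}, ..., u^{r_d}) with 0 ≤ r_1 ≤ r_2 ≤ ... ≤ r_d ≤ p; and A has all its entries in the subring k[[u^p]] and is invertible over k[[u]]. Then the multiset {t_1, ..., t_d} equals the multiset {r_1, ..., r_d}. -/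
/-!
For `m ≤ p` consider the space `V_m ⊆ kᵈ` of constant vectors `v` with `M v ≡ 0 mod u^m`.
As `M` is upper triangular with diagonal valuations `tᵢ`, `dim V_m ≤ #{i | m ≤ tᵢ}`.
As `A ≡ A(0) mod u^p` and `m ≤ p`, every `v` with `(A(0) v)ⱼ = 0` whenever `rⱼ < m` lies in `V_m`,
so `dim V_m ≥ #{j | m ≤ rⱼ}`. Summing over `1 ≤ m ≤ p` gives `∑ rⱼ ≤ ∑ min(p, tᵢ) ≤ ∑ tᵢ`, while
the `u`-valuations of the determinants give `∑ tᵢ = ∑ rⱼ`. So all these inequalities are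
equalities, and the level counts `#{i | m ≤ tᵢ}` and `#{j | m ≤ rⱼ}` agree for every `m`.
-/

open PowerSeries Matrix Finset Module

section Counting

variable {ι : Type*} [Fintype ι]

theorem sum_card_filter_le_eq_sum_min (f : ι → ℕ) (p : ℕ) :
    ∑ m ∈ Icc 1 p, #{i | m ≤ f i} = ∑ i, min p (f i) := by
  simp_rw [card_filter]
  rw [sum_comm]
  refine sum_congr rfl fun i _ => ?_
  rw [← card_filter, show {m ∈ Icc 1 p | m ≤ f i} = Icc 1 (min p (f i)) by ext; simp; omega,
    Nat.card_Icc, Nat.add_sub_cancel]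

theorem card_filter_eq_add_card_filter_succ_le (f : ι → ℕ) (a : ℕ) :
    #{i | a = f i} + #{i | a + 1 ≤ f i} = #{i | a ≤ f i} := by
  classical
  rw [← card_union_of_disjoint (disjoint_filter.2 fun i _ h => by omega), ← filter_or]
  congr 1
  ext i
  simp only [mem_filter, mem_univ, true_and]
  omega

theorem map_univ_eq_of_forall_card_filter_le_eq {f g : ι → ℕ}
    (h : ∀ m, #{i | m ≤ f i} = #{i | m ≤ g i}) : univ.val.map f = univ.val.map g := by
  ext a
  rw [Multiset.count_map, Multiset.count_map]
  have hf := card_filter_eq_add_card_filter_succ_le f a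
  have hg := card_filter_eq_add_card_filter_succ_le g a
  have := h a
  have := h (a + 1)
  change #{i | a = f i} = #{i | a = g i}
  omega

theorem map_univ_eq_of_card_filter_le_le {f g : ι → ℕ} {p : ℕ} (hg : ∀ i, g i ≤ p)
    (hcard : ∀ m, m ≤ p → #{i | m ≤ g i} ≤ #{i | m ≤ f i}) (hsum : ∑ i, f i ≤ ∑ i, g i) :
    univ.val.map f = univ.val.map g := by
  have hlayers : ∀ m ∈ Icc 1 p, #{i | m ≤ g i} ≤ #{i | m ≤ f i} :=
    fun m hm => hcard m (mem_Icc.1 hm).2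
  have hg_min : ∑ i, min p (g i) = ∑ i, g i := sum_congr rfl fun i _ => min_eq_right (hg i)
  have hsum_le := sum_le_sum hlayers
  rw [sum_card_filter_le_eq_sum_min, sum_card_filter_le_eq_sum_min, hg_min] at hsum_le
  have hmin : ∑ i, min p (f i) ≤ ∑ i, f i := sum_le_sum fun i _ => min_le_right _ _
  have hf : ∀ i, f i ≤ p := fun i => by
    have := (sum_eq_sum_iff_of_le fun i _ => min_le_right p (f i)).1 (by omega) i (mem_univ i)
    omega
  have hlevel := (sum_eq_sum_iff_of_le hlayers).1 (by
    rw [sum_card_filter_le_eq_sum_min, sum_card_filter_le_eq_sum_min, hg_min]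
    omega)
  refine map_univ_eq_of_forall_card_filter_le_eq fun m => ?_
  rcases Nat.eq_zero_or_pos m with rfl | hm
  · simp
  rcases le_or_gt m p with hmp | hpm
  · exact (hlevel m (mem_Icc.2 ⟨hm, hmp⟩)).symm
  · rw [filter_false_of_mem fun i _ => by have := hf i; omega,
      filter_false_of_mem fun i _ => by have := hg i; omega]

end Counting

section MatrixLemmas

variable {R : Type*} [CommSemiring R] {l n : Type*} [Fintype n]

theorem dvd_mulVec_apply_of_forall_dvd (N : Matrix l n R) {a : R} {w : n → R}
    (h : ∀ j, a ∣ w j) (i : l) : a ∣ (N *ᵥ w) i :=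
  dvd_sum fun j _ => (h j).mul_left _

theorem dvd_mulVec_apply_of_forall_dvd_entries {N : Matrix l n R} {a : R}
    (h : ∀ i j, a ∣ N i j) (w : n → R) (i : l) : a ∣ (N *ᵥ w) i :=
  dvd_sum fun j _ => (h i j).mul_right _

theorem mulVec_apply_eq_mul_of_isUpperTriangular [LinearOrder n] {M : Matrix n n R}
    (hM : M.IsUpperTriangular) {w : n → R} {i : n} (hw : ∀ j, i < j → w j = 0) :
    (M *ᵥ w) i = M i i * w i := by
  refine sum_eq_single i (fun j _ hji => ?_) (by simp)
  rcases hji.lt_or_gt with h | h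
  · simp only [hM h, zero_mul]
  · simp only [hw j h, mul_zero]

theorem associated_pow_sum_det_of_isUpperTriangular {R : Type*} [CommRing R] [LinearOrder n]
    [DecidableEq n] {M : Matrix n n R}
    (hM : M.IsUpperTriangular) {x : R} {t : n → ℕ} (ht : ∀ i, Associated (x ^ t i) (M i i)) :
    Associated (x ^ ∑ i, t i) M.det := by
  rw [det_of_isUpperTriangular hM, ← prod_pow_eq_pow_sum]
  exact Associated.prod _ _ _ fun i _ => ht i

end MatrixLemmas

namespace PowerSeries

variable {R : Type*} [CommRing R]

theorem eq_of_associated_X_pow [IsDomain R] {a b : ℕ}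
    (h : Associated (X ^ a : R⟦X⟧) (X ^ b)) : a = b :=
  le_antisymm ((pow_dvd_pow_iff X_prime.ne_zero X_prime.not_isUnit).1 h.dvd)
    ((pow_dvd_pow_iff X_prime.ne_zero X_prime.not_isUnit).1 h.symm.dvd)

theorem X_pow_dvd_sub_C_constantCoeff {f : R⟦X⟧} {p : ℕ}
    (hf : ∀ n, coeff n f ≠ 0 → p ∣ n) : X ^ p ∣ f - C (constantCoeff f) := by
  refine X_pow_dvd_iff.2 fun n hn => ?_
  rcases Nat.eq_zero_or_pos n with rfl | hpos
  · simp
  rw [map_sub, coeff_C, if_neg hpos.ne', sub_zero]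
  by_contra hne
  exact absurd (Nat.le_of_dvd hpos (hf n hne)) (by omega)

end PowerSeries

section KerModXPow

variable {k : Type*} [Field k] {n : Type*} [Fintype n]

def kerModXPow (N : Matrix n n k⟦X⟧) (m : ℕ) : Submodule k (n → k) where
  carrier := {v | ∀ i, X ^ m ∣ (N *ᵥ fun j => C (v j)) i}
  zero_mem' i := by simp [← Pi.zero_def]
  add_mem' {a b} ha hb i := by
    simpa [← Pi.add_def, mulVec_add] using dvd_add (ha i) (hb i)
  smul_mem' s a ha i := by
    simpa [← smul_eq_C_mul, ← Pi.smul_def, mulVec_smul] using (ha i).mul_left (C s)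

theorem kerModXPow_le_mul_left (B N : Matrix n n k⟦X⟧) (m : ℕ) :
    kerModXPow N m ≤ kerModXPow (B * N) m := fun v hv i => by
  rw [← mulVec_mulVec]
  exact dvd_mulVec_apply_of_forall_dvd B hv i

theorem eq_zero_of_mem_kerModXPow_of_isUpperTriangular [LinearOrder n] {M : Matrix n n k⟦X⟧}
    (hM : M.IsUpperTriangular) {t : n → ℕ} (ht : ∀ i, Associated (X ^ t i) (M i i)) {m : ℕ}
    {v : n → k} (hv : v ∈ kerModXPow M m) (hvt : ∀ i, m ≤ t i → v i = 0) : v = 0 := by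
  classical
  by_contra hne
  obtain ⟨i, hi, hmax⟩ := (univ.filter fun i => v i ≠ 0).exists_max_image id
    (by simpa [filter_nonempty_iff, Function.ne_iff] using hne)
  rw [mem_filter] at hi
  have htop : ∀ j, i < j → C (v j) = 0 := fun j hij => by
    by_contra h
    exact absurd (hmax j (by simpa using h)) (not_le.2 hij)
  have hdvd := hv i
  rw [mulVec_apply_eq_mul_of_isUpperTriangular hM htop] at hdvd
  have hassoc : Associated (X ^ t i) (M i i * C (v i)) :=
    (ht i).trans (associated_mul_unit_right _ _ ((isUnit_iff_ne_zero.2 hi.2).map C))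
  rw [← hassoc.dvd_iff_dvd_right, pow_dvd_pow_iff X_prime.ne_zero X_prime.not_isUnit] at hdvd
  exact hi.2 (hvt i hdvd)

theorem finrank_kerModXPow_le_of_isUpperTriangular [LinearOrder n] {M : Matrix n n k⟦X⟧}
    (hM : M.IsUpperTriangular) {t : n → ℕ} (ht : ∀ i, Associated (X ^ t i) (M i i)) (m : ℕ) :
    finrank k (kerModXPow M m) ≤ #{i | m ≤ t i} := by
  let restrict : kerModXPow M m →ₗ[k] ({i // m ≤ t i} → k) :=
    LinearMap.funLeft k k Subtype.val ∘ₗ (kerModXPow M m).subtype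
  have hinj : Function.Injective restrict := by
    rw [← LinearMap.ker_eq_bot, LinearMap.ker_eq_bot']
    exact fun v hv => Subtype.ext <|
      eq_zero_of_mem_kerModXPow_of_isUpperTriangular hM ht v.2 fun i hi => congrFun hv ⟨i, hi⟩
  simpa [Fintype.card_subtype] using LinearMap.finrank_le_finrank_of_injective hinj

theorem card_le_finrank_kerModXPow_diagonal_mul [DecidableEq n] {A : Matrix n n k⟦X⟧} {p m : ℕ}
    (hA : ∀ i j, X ^ p ∣ A i j - C (constantCoeff (A i j))) (r : n → ℕ) (hm : m ≤ p) :
    #{i | m ≤ r i} ≤ finrank k (kerModXPow (diagonal (fun i => X ^ r i) * A) m) := by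
  let A₀ := A.map constantCoeff
  let φ : (n → k) →ₗ[k] ({i // r i < m} → k) := LinearMap.funLeft k k Subtype.val ∘ₗ A₀.mulVecLin
  have hker : LinearMap.ker φ ≤ kerModXPow (diagonal (fun i => X ^ r i) * A) m := by
    intro v hv i
    have hA₀v : ∀ j, r j < m → (A₀ *ᵥ v) j = 0 := fun j hj => congrFun hv ⟨j, hj⟩
    have hsplit : (A *ᵥ fun j => C (v j)) i
        = C ((A₀ *ᵥ v) i) + ((A - A₀.map C) *ᵥ fun j => C (v j)) i := by
      rw [RingHom.map_mulVec, sub_mulVec]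
      simp [Function.comp_def]
    have hrest := dvd_mulVec_apply_of_forall_dvd_entries hA (fun j => C (v j)) i
    rw [← mulVec_mulVec, mulVec_diagonal, hsplit]
    rcases lt_or_ge (r i) m with hlt | hle
    · rw [hA₀v i hlt, map_zero, zero_add]
      exact (pow_dvd_pow X hm).trans (dvd_mul_of_dvd_right hrest _)
    · exact (pow_dvd_pow X hle).mul_right _
  have hrank := φ.finrank_range_add_finrank_ker
  have hrange := (LinearMap.range φ).finrank_le
  have hcard : #{i | r i < m} + #{i | m ≤ r i} = Fintype.card n := by
    simpa only [not_lt, card_univ] using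
      card_filter_add_card_filter_not (s := univ) fun i => r i < m
  simp only [Module.finrank_fintype_fun_eq_card, Fintype.card_subtype] at hrank hrange
  have hker_le := Submodule.finrank_mono hker
  omega

end KerModXPow

theorem stmt2_general {k : Type*} [Field k] {p d : ℕ}
    (t : Fin d → ℕ) (c : Fin d → PowerSeries k) (hc : ∀ i, IsUnit (c i))
    (r : Fin d → ℕ) (hr_le : ∀ i, r i ≤ p)
    (M B A : Matrix (Fin d) (Fin d) (PowerSeries k))
    (hM_lower : ∀ i j : Fin d, j < i → M i j = 0)
    (hM_diag : ∀ i : Fin d, M i i = c i * PowerSeries.X ^ (t i))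
    (hB : IsUnit B.det)
    (hAcoeff : ∀ i j : Fin d, ∀ n : ℕ, PowerSeries.coeff n (A i j) ≠ 0 → p ∣ n)
    (hA : IsUnit A.det)
    (hfact : M = B * Matrix.diagonal (fun i => (PowerSeries.X : PowerSeries k) ^ (r i)) * A) :
    Multiset.map t Finset.univ.val = Multiset.map r Finset.univ.val := by
  have hM : M.IsUpperTriangular := fun i j hji => hM_lower i j hji
  have hM_assoc : ∀ i, Associated (X ^ t i) (M i i) := fun i => by
    rw [hM_diag]
    exact associated_unit_mul_right _ _ (hc i)
  have hsum : ∑ i, t i = ∑ i, r i := by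
    refine eq_of_associated_X_pow
      ((associated_pow_sum_det_of_isUpperTriangular hM hM_assoc).trans ?_)
    rw [hfact, det_mul, det_mul, det_diagonal, prod_pow_eq_pow_sum]
    exact (associated_mul_unit_left _ _ hA).trans (associated_unit_mul_left _ _ hB)
  refine map_univ_eq_of_card_filter_le_le hr_le (fun m hm => ?_) hsum.le
  calc #{i | m ≤ r i}
      ≤ finrank k (kerModXPow (diagonal (fun i => X ^ r i) * A) m) :=
        card_le_finrank_kerModXPow_diagonal_mul
          (fun i j => X_pow_dvd_sub_C_constantCoeff (hAcoeff i j)) r hm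
    _ ≤ finrank k (kerModXPow M m) := by
        rw [hfact, Matrix.mul_assoc]
        exact Submodule.finrank_mono (kerModXPow_le_mul_left _ _ m)
    _ ≤ #{i | m ≤ t i} := finrank_kerModXPow_le_of_isUpperTriangular hM hM_assoc m

/-- the multiset lemma of Section 2 of the paper.
If `M = B · diag(u^{r₁}, …, u^{r_d}) · A` over `k[[u]]`, with `M` upper triangular
with diagonal entries `c i * u ^ (t i)` for units `c i`, `B` invertible,
`0 ≤ r₁ ≤ ⋯ ≤ r_d ≤ p`, and `A` invertible with all entries in `k[[u^p]]`, then
`{t₁, …, t_d} = {r₁, …, r_d}` as multisets. -/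
theorem stmt2 {k : Type*} [Field k] {p d : ℕ} (hp : p.Prime) (hodd : Odd p)
    (t : Fin d → ℕ) (c : Fin d → PowerSeries k) (hc : ∀ i, IsUnit (c i))
    (r : Fin d → ℕ) (hr_mono : Monotone r) (hr_le : ∀ i, r i ≤ p)
    (M B A : Matrix (Fin d) (Fin d) (PowerSeries k))
    (hM_lower : ∀ i j : Fin d, j < i → M i j = 0)
    (hM_diag : ∀ i : Fin d, M i i = c i * PowerSeries.X ^ (t i))
    (hB : IsUnit B.det)
    (hAcoeff : ∀ i j : Fin d, ∀ n : ℕ, PowerSeries.coeff n (A i j) ≠ 0 → p ∣ n)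
    (hA : IsUnit A.det)
    (hfact : M = B * Matrix.diagonal (fun i => (PowerSeries.X : PowerSeries k) ^ (r i)) * A) :
    Multiset.map t Finset.univ.val = Multiset.map r Finset.univ.val :=
  stmt2_general t c hc r hr_le M B A hM_lower hM_diag hB hAcoeff hA hfact
end

section
/- Let k be a field, p > 2 a prime, and f, d ≥ 1 integers. Let φ denote the k-algebra endomorphism of k[[u]] determined by φ(u) = u^p, applied entrywise to matrices. Fix nonnegative integers t_{i,s} for 1 ≤ i ≤ d and s ∈ ℤ/fℤ, and nonzero scalars a_1, ..., a_d ∈ k^×; for a ∈ k^× write (a)_s = a if s ≡ 0 (mod f) and (a)_s = 1 otherwise. For each i and each s ∈ ℤ/fℤ set α_s(i) = (p^f − 1)^{−1} · Σ_{j=1}^{f} p^{f−j} t_{i, (j+s) mod f} ∈ ℚ. Assume that for all 1 ≤ i < j ≤ d it is NOT the case that simultaneously a_i = a_j and α_s(j) − α_s(i) is a nonnegative integer for every s. Then for every family (B_s)_{s ∈ ℤ/fℤ} of d×d upper triangular matrices over k[[u]] such that the i-th diagonal entry of B_s equals (a_i)_s · u^{t_{i,s}}, there exist upper triangular matrices T_s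 ∈ GL_d(k[[u]]) with all diagonal entries equal to 1 such that, for every s, the matrix A_s := T_s^{−1} · B_s · φ(T_{s−1}) is upper triangular, its i-th diagonal entry equals (a_i)_s · u^{t_{i,s}}, and for every i < j its (i,j)-entry is a polynomial in u of degree strictly less than t_{j,s}. -/
/-!
Write `A_s = T_s⁻¹ B_s φ(T_{s-1})` as `T_s A_s = B_s φ(T_{s-1})` and solve for `T` and `A` one
superdiagonal at a time: on the `n`-th superdiagonal the `(i, j)` entry of this equation reads
`A_ij(s) = c(s) + D_i(s) φ(x(s-1)) - x(s) D_j(s)` with `x = T_ij` and `c` determined by the lower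
superdiagonals. So everything reduces to choosing `x` that makes the right side a polynomial of
degree `< t_j(s)`.

In coefficients this is a linear recursion `y v = G v + L v * y (F v)` on `v = (s, m) ∈ ℤ/f × ℕ`,
with `F (s, m) = (s - 1, (m + t_j(s) - t_i(s)) / p)`. Above `max t_j` the map `F` lowers `m`, so
only the finite block below it matters, and there the recursion is uniquely solvable, hence
solvable, once the weight around every cycle of `F` differs from `1`. Every cycle has length `f`
(`F^f` is monotone in `m`). Its weight is `0` unless all its steps are exact divisions; then it is
`a_i / a_j`, while telescoping gives `α_s(j) - α_s(i) = m` at every `s`. The hypothesis on the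
`a_i` and `α_s` is exactly what excludes weight `1`.
-/

/-- The `k`-algebra endomorphism of `k[[u]]` determined by `u ↦ u^p`,
described coefficientwise: the coefficient of `u^(p*n)` in `φ f` is the
coefficient of `u^n` in `f`, and all other coefficients vanish. -/
noncomputable def phiPS (k : Type*) [Field k] (p : ℕ) (f : PowerSeries k) : PowerSeries k :=
  PowerSeries.mk fun n => if p ∣ n then PowerSeries.coeff (n / p) f else 0

/-- `α_s(t) = (p^f − 1)⁻¹ · Σ_{j=1}^{f} p^{f−j} t_{(j+s) mod f}` as a rational number. -/
noncomputable def alphaQ (p f : ℕ) (t : ZMod f → ℤ) (s : ZMod f) : ℚ :=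
  ((p : ℚ) ^ f - 1)⁻¹ * ∑ j ∈ Finset.Icc 1 f, (p : ℚ) ^ (f - j) * (t (s + (j : ZMod f)) : ℚ)

open Function Finset

section LinearRecursion

variable {V k : Type*} [Field k] (F : V → V) (L : V → k)

lemma eq_prod_mul_iterate {S : Set V} (hS : Set.MapsTo F S S) {y : V → k}
    (hy : ∀ v ∈ S, y v = L v * y (F v)) (n : ℕ) {v : V} (hv : v ∈ S) :
    y v = (∏ l ∈ range n, L (F^[l] v)) * y (F^[n] v) := by
  induction n with
  | zero => simp
  | succ n ih =>
    rw [ih, prod_range_succ, iterate_succ_apply', hy _ (hS.iterate n hv), mul_assoc]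

lemma eq_zero_of_eq_mul_comp {S : Set V} (hS : Set.MapsTo F S S) (hfin : S.Finite)
    (hcyc : ∀ w ∈ periodicPts F, ∏ l ∈ range (minimalPeriod F w), L (F^[l] w) ≠ 1)
    {y : V → k} (hy : ∀ v ∈ S, y v = L v * y (F v)) {v : V} (hv : v ∈ S) : y v = 0 := by
  obtain ⟨n₁, n₂, hlt, heq⟩ :=
    hfin.exists_lt_map_eq_of_forall_mem (f := fun n => F^[n] v) fun n => hS.iterate n hv
  have hper : F^[n₁] v ∈ periodicPts F := ⟨n₂ - n₁, by omega, by
    rw [IsPeriodicPt, IsFixedPt, ← iterate_add_apply, Nat.sub_add_cancel hlt.le]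
    exact heq.symm⟩
  have hcycle := eq_prod_mul_iterate F L hS hy (minimalPeriod F (F^[n₁] v)) (hS.iterate n₁ hv)
  rw [isPeriodicPt_minimalPeriod F _] at hcycle
  have hzero : y (F^[n₁] v) = 0 := by
    by_contra hne
    exact hcyc _ hper (mul_right_cancel₀ hne (by rw [one_mul, ← hcycle]))
  rw [eq_prod_mul_iterate F L hS hy n₁ hv, hzero, mul_zero]

lemma exists_eq_add_mul_comp_on {S : Set V} (hS : Set.MapsTo F S S) (hfin : S.Finite)
    (hcyc : ∀ w ∈ periodicPts F, ∏ l ∈ range (minimalPeriod F w), L (F^[l] w) ≠ 1)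
    (G : V → k) : ∃ y : V → k, ∀ v ∈ S, y v = G v + L v * y (F v) := by
  have : Finite S := hfin.to_subtype
  let Ψ : (S → k) →ₗ[k] (S → k) :=
    { toFun := fun z v => z v - L v * z (hS.restrict F S S v)
      map_add' := fun z₁ z₂ => by ext v; simp only [Pi.add_apply]; ring
      map_smul' := fun c z => by
        ext v
        simp only [Pi.smul_apply, smul_eq_mul, RingHom.id_apply]
        ring }
  have hext : ∀ z : S → k, ∀ v : S,
      extend Subtype.val z 0 (F v) = z (hS.restrict F S S v) := fun z v =>
    Subtype.val_injective.extend_apply z 0 (hS.restrict F S S v)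
  have hinj : Injective Ψ := by
    rw [← LinearMap.ker_eq_bot, Submodule.eq_bot_iff]
    intro z hz
    ext v
    have hy : ∀ w ∈ S, extend Subtype.val z 0 w = L w * extend Subtype.val z 0 (F w) := by
      intro w hw
      rw [Subtype.val_injective.extend_apply z 0 ⟨w, hw⟩, hext z ⟨w, hw⟩]
      exact sub_eq_zero.mp (congrFun hz ⟨w, hw⟩)
    rw [← Subtype.val_injective.extend_apply z 0 v]
    exact eq_zero_of_eq_mul_comp F L hS hfin hcyc hy v.2
  obtain ⟨z, hz⟩ := LinearMap.injective_iff_surjective.mp hinj fun v => G v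
  refine ⟨extend Subtype.val z 0, fun v hv => ?_⟩
  rw [Subtype.val_injective.extend_apply z 0 ⟨v, hv⟩, hext z ⟨v, hv⟩, ← congrFun hz ⟨v, hv⟩]
  simp [Ψ]

variable {F} in
noncomputable def extendByRecursion (r : V → ℕ) (M : ℕ) (hdesc : ∀ v, M < r v → r (F v) < r v)
    (G y₀ : V → k) (v : V) : k :=
  if r v ≤ M then y₀ v else G v + L v * extendByRecursion r M hdesc G y₀ (F v)
termination_by r v
decreasing_by exact hdesc v (by omega)

theorem exists_eq_add_mul_comp (r : V → ℕ) (M : ℕ) (hfin : {v | r v ≤ M}.Finite)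
    (hmaps : ∀ v, r v ≤ M → r (F v) ≤ M) (hdesc : ∀ v, M < r v → r (F v) < r v)
    (hcyc : ∀ w ∈ periodicPts F, ∏ l ∈ range (minimalPeriod F w), L (F^[l] w) ≠ 1)
    (G : V → k) : ∃ y : V → k, ∀ v, y v = G v + L v * y (F v) := by
  obtain ⟨y₀, hy₀⟩ := exists_eq_add_mul_comp_on F L hmaps hfin hcyc G
  refine ⟨extendByRecursion L r M hdesc G y₀, fun v => ?_⟩
  by_cases hv : r v ≤ M
  · rw [extendByRecursion, if_pos hv, extendByRecursion, if_pos (hmaps v hv)]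
    exact hy₀ v hv
  · rw [extendByRecursion, if_neg hv]

end LinearRecursion

namespace Matrix

section UpperFrom

variable {R : Type*} [CommRing R] {d : ℕ} {m n : ℕ} {M N : Matrix (Fin d) (Fin d) R}

def IsUpperFrom (n : ℕ) (M : Matrix (Fin d) (Fin d) R) : Prop :=
  ∀ i j : Fin d, (j : ℕ) < i + n → M i j = 0

lemma IsUpperFrom.mono (h : IsUpperFrom n M) (hmn : m ≤ n) : IsUpperFrom m M :=
  fun i j hij => h i j (by omega)

lemma IsUpperFrom.add (hM : IsUpperFrom n M) (hN : IsUpperFrom n N) : IsUpperFrom n (M + N) :=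
  fun i j hij => by rw [add_apply, hM i j hij, hN i j hij, add_zero]

lemma IsUpperFrom.sub (hM : IsUpperFrom n M) (hN : IsUpperFrom n N) : IsUpperFrom n (M - N) :=
  fun i j hij => by rw [sub_apply, hM i j hij, hN i j hij, sub_zero]

lemma IsUpperFrom.map (h : IsUpperFrom n M) (σ : R →+* R) : IsUpperFrom n (M.map σ) :=
  fun i j hij => by rw [map_apply, h i j hij, map_zero]

lemma isUpperFrom_succ_iff :
    IsUpperFrom (n + 1) M ↔ IsUpperFrom n M ∧ ∀ i j : Fin d, (j : ℕ) = i + n → M i j = 0 :=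
  ⟨fun h => ⟨h.mono n.le_succ, fun i j hij => h i j (by omega)⟩,
    fun ⟨h, h'⟩ i j hij => (Nat.lt_succ_iff_lt_or_eq.mp hij).elim (h i j) (h' i j)⟩

lemma IsUpperFrom.eq_zero (h : IsUpperFrom n M) (hn : d ≤ n) : M = 0 :=
  ext fun i j => h i j (by omega)

lemma IsUpperFrom.mul (hM : IsUpperFrom m M) (hN : IsUpperFrom n N) :
    IsUpperFrom (m + n) (M * N) := fun i j hij => by
  rw [mul_apply]
  refine sum_eq_zero fun l _ => ?_
  rcases lt_or_ge (l : ℕ) (i + m) with hl | hl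
  · rw [hM i l hl, zero_mul]
  · rw [hN l j (by omega), mul_zero]

lemma IsUpperFrom.mul_apply_eq (hM : IsUpperFrom m M) (hN : IsUpperFrom n N) {i l j : Fin d}
    (hl : (l : ℕ) = i + m) (hj : (j : ℕ) = l + n) : (M * N) i j = M i l * N l j := by
  rw [mul_apply]
  refine sum_eq_single l (fun l' _ hne => ?_) (by simp)
  rcases lt_or_ge (l' : ℕ) (i + m) with hl' | hl'
  · rw [hM i l' hl', zero_mul]
  · rw [hN l' j (by omega), mul_zero]

lemma isUnit_det_of_unitriangular (hlow : ∀ i j : Fin d, j < i → M i j = 0)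
    (hdiag : ∀ i, M i i = 1) : IsUnit M.det := by
  rw [det_of_isUpperTriangular fun i j hij => hlow i j hij]
  simp [hdiag]

lemma isUpperFrom_one_sub_diagonal_iff {D : Fin d → R} :
    IsUpperFrom 1 (M - diagonal D) ↔ (∀ i j : Fin d, j < i → M i j = 0) ∧ ∀ i, M i i = D i := by
  constructor
  · intro h
    refine ⟨fun i j hij => ?_, fun i => ?_⟩
    · simpa [diagonal_apply_ne _ hij.ne'] using h i j (by omega)
    · simpa [sub_eq_zero] using h i i (by omega)
  · rintro ⟨hlow, hdiag⟩ i j hij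
    rcases Nat.lt_succ_iff_lt_or_eq.mp hij with hij | hij
    · simp [hlow i j hij, diagonal_apply_ne _ (Fin.ne_of_lt hij).symm]
    · obtain rfl := Fin.ext hij
      simp [hdiag]

lemma isUpperFrom_one_sub_one_iff :
    IsUpperFrom 1 (M - 1) ↔ (∀ i j : Fin d, j < i → M i j = 0) ∧ ∀ i, M i i = 1 := by
  rw [← diagonal_one]
  exact isUpperFrom_one_sub_diagonal_iff

lemma IsUpperFrom.upper_of_sub_diagonal {D : Fin d → R} (h : IsUpperFrom 1 (M - diagonal D)) :
    IsUpperFrom 0 M := fun i j hij =>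
  (isUpperFrom_one_sub_diagonal_iff.mp h).1 i j (by omega)

end UpperFrom

end Matrix

open Matrix

section Reduction

variable {R ι : Type*} [CommRing R] [Sub ι] [One ι] {d : ℕ} (σ : R →+* R) (D : Fin d → ι → R)
  (red : Fin d → ι → R → Prop)

def IsPartialReduction (n : ℕ) (B T A : ι → Matrix (Fin d) (Fin d) R) : Prop :=
  ∀ s, IsUpperFrom 1 (T s - 1) ∧ IsUpperFrom 1 (A s - diagonal (D · s)) ∧
    (∀ i j, i < j → red j s (A s i j)) ∧ IsUpperFrom n (B s * (T (s - 1)).map σ - T s * A s)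

lemma isUpperFrom_succ_residual {n : ℕ} {B P Q T E A A' : Matrix (Fin d) (Fin d) R}
    (hB : IsUpperFrom 0 B) (hT : IsUpperFrom 1 (T - 1)) (hQ : IsUpperFrom n Q)
    (hE : IsUpperFrom n E) (hA' : IsUpperFrom 0 A') (hΔ : IsUpperFrom n (A' - A))
    (hR : IsUpperFrom n (B * P - T * A))
    (hnew : ∀ i j : Fin d, (j : ℕ) = i + n →
      (B * P - T * A) i j + B i i * Q i j - (A' - A) i j - E i j * A' j j = 0) :
    IsUpperFrom (n + 1) (B * (P + Q) - (T + E) * A') := by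
  have hT0 : IsUpperFrom 0 T := by
    rw [← diagonal_one] at hT
    exact hT.upper_of_sub_diagonal
  have hTdiag := (isUpperFrom_one_sub_one_iff.mp hT).2
  have hsplit : B * (P + Q) - (T + E) * A'
      = (B * P - T * A) + B * Q - T * (A' - A) - E * A' := by noncomm_ring
  rw [hsplit, isUpperFrom_succ_iff]
  refine ⟨((hR.add (by simpa using hB.mul hQ)).sub (by simpa using hT0.mul hΔ)).sub
    (by simpa using hE.mul hA'), fun i j hij => ?_⟩
  simp only [Matrix.sub_apply, Matrix.add_apply]
  rw [hB.mul_apply_eq hQ (l := i) (by simp) hij, hT0.mul_apply_eq hΔ (l := i) (by simp) hij,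
    hE.mul_apply_eq hA' (l := j) hij (by simp), hTdiag i, one_mul]
  exact hnew i j hij

variable {σ D red} in
lemma IsPartialReduction.exists_succ {n : ℕ} (hn : 1 ≤ n)
    (hscalar : ∀ i j : Fin d, i < j → ∀ c : ι → R, ∃ x : ι → R, ∀ s,
      red j s (c s + D i s * σ (x (s - 1)) - x s * D j s))
    {B T A : ι → Matrix (Fin d) (Fin d) R} (hB : ∀ s, IsUpperFrom 1 (B s - diagonal (D · s)))
    (h : IsPartialReduction σ D red n B T A) :
    ∃ T' A', IsPartialReduction σ D red (n + 1) B T' A' := by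
  set residual := fun s => B s * (T (s - 1)).map σ - T s * A s
  have hlt : ∀ {i j : Fin d}, (j : ℕ) = i + n → i < j := fun h => Fin.lt_def.mpr (by omega)
  choose x hx using fun i j (hij : i < j) => hscalar i j hij fun s => residual s i j + A s i j
  let E : ι → Matrix (Fin d) (Fin d) R := fun s =>
    of fun i j => if h : (j : ℕ) = i + n then x i j (hlt h) s else 0
  let A' : ι → Matrix (Fin d) (Fin d) R := fun s => of fun i j =>
    if h : (j : ℕ) = i + n then
      residual s i j + A s i j + D i s * σ (x i j (hlt h) (s - 1)) - x i j (hlt h) s * D j s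
    else A s i j
  have hE : ∀ s, IsUpperFrom n (E s) := fun s i j hij => dif_neg (by omega)
  have hΔ : ∀ s, IsUpperFrom n (A' s - A s) := fun s i j hij => by
    simp [A', dif_neg (show (j : ℕ) ≠ i + n by omega)]
  have hA' : ∀ s, IsUpperFrom 1 (A' s - diagonal (D · s)) := fun s => by
    rw [show A' s - diagonal (D · s) = (A s - diagonal (D · s)) + (A' s - A s) by abel]
    exact (h s).2.1.add ((hΔ s).mono hn)
  refine ⟨fun s => T s + E s, A', fun s => ⟨?_, hA' s, fun i j hij => ?_, ?_⟩⟩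
  · rw [add_sub_right_comm]
    exact (h s).1.add ((hE s).mono hn)
  · by_cases hj : (j : ℕ) = i + n
    · simpa [A', dif_pos hj] using hx i j hij s
    · simpa [A', dif_neg hj] using (h s).2.2.1 i j hij
  · rw [Matrix.map_add _ (map_add σ)]
    refine isUpperFrom_succ_residual (hB s).upper_of_sub_diagonal (h s).1 ((hE (s - 1)).map σ)
      (hE s) (hA' s).upper_of_sub_diagonal (hΔ s) (h s).2.2.2 fun i j hij => ?_
    have hjj : ¬ (j : ℕ) = j + n := by omega
    simp only [E, A', residual, Matrix.sub_apply, map_apply, of_apply, dif_pos hij, dif_neg hjj,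
      (isUpperFrom_one_sub_diagonal_iff.mp (hB s)).2 i,
      (isUpperFrom_one_sub_diagonal_iff.mp (h s).2.1).2 j]
    ring

theorem exists_unitriangular_reduction [DecidableEq ι]
    (hscalar : ∀ i j : Fin d, i < j → ∀ c : ι → R, ∃ x : ι → R, ∀ s,
      red j s (c s + D i s * σ (x (s - 1)) - x s * D j s))
    (hred : ∀ j s, red j s 0) (B : ι → Matrix (Fin d) (Fin d) R)
    (hBlow : ∀ s, ∀ i j : Fin d, j < i → B s i j = 0) (hBdiag : ∀ s i, B s i i = D i s) :
    ∃ T : ι → Matrix (Fin d) (Fin d) R, ∀ s,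
      (∀ i j : Fin d, j < i → T s i j = 0) ∧ (∀ i, T s i i = 1) ∧
      (∀ i j : Fin d, j < i → ((T s)⁻¹ * B s * (T (s - 1)).map σ) i j = 0) ∧
      (∀ i, ((T s)⁻¹ * B s * (T (s - 1)).map σ) i i = D i s) ∧
      (∀ i j, i < j → red j s (((T s)⁻¹ * B s * (T (s - 1)).map σ) i j)) := by
  have hB s : IsUpperFrom 1 (B s - diagonal (D · s)) :=
    isUpperFrom_one_sub_diagonal_iff.mpr ⟨hBlow s, hBdiag s⟩
  have base : IsPartialReduction σ D red 1 B 1 fun s => diagonal (D · s) := fun s =>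
    ⟨by simp [IsUpperFrom], by simp [IsUpperFrom],
      fun i j hij => by simpa [diagonal_apply_ne _ hij.ne] using hred j s,
      by simpa [Matrix.map_one σ (map_zero σ) (map_one σ)] using hB s⟩
  obtain ⟨T, A, h⟩ : ∃ T A, IsPartialReduction σ D red (d + 1) B T A :=
    Nat.le_induction ⟨_, _, base⟩ (fun n hn ⟨_, _, h⟩ => h.exists_succ hn hscalar hB) (d + 1)
      (by omega)
  refine ⟨T, fun s => ?_⟩
  obtain ⟨hT, hA, hAred, hres⟩ := h s
  obtain ⟨hTlow, hTdiag⟩ := isUpperFrom_one_sub_one_iff.mp hT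
  have hconj : (T s)⁻¹ * B s * (T (s - 1)).map σ = A s := by
    rw [Matrix.mul_assoc, sub_eq_zero.mp (hres.eq_zero (by omega)), ← Matrix.mul_assoc,
      nonsing_inv_mul _ (isUnit_det_of_unitriangular hTlow hTdiag), Matrix.one_mul]
  rw [hconj]
  exact ⟨hTlow, hTdiag, (isUpperFrom_one_sub_diagonal_iff.mp hA).1,
    (isUpperFrom_one_sub_diagonal_iff.mp hA).2, hAred⟩

end Reduction

lemma ZMod.prod_range_sub_natCast {M : Type*} [CommMonoid M] {f : ℕ} [NeZero f]
    (g : ZMod f → M) (s : ZMod f) : ∏ l ∈ range f, g (s - l) = ∏ t, g t :=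
  prod_nbij' (fun l => s - l) (fun t => (s - t).val) (by simp)
    (fun t _ => mem_range.mpr (ZMod.val_lt _))
    (fun l hl => by simp [ZMod.val_cast_of_lt (mem_range.mp hl)]) (fun t _ => by simp)
    (fun _ _ => rfl)

namespace PowerSeries

open scoped Polynomial

lemma exists_degree_lt_eq_coe {R : Type*} [Semiring R] {g : R⟦X⟧} {t : ℕ}
    (h : ∀ n, t ≤ n → coeff n g = 0) : ∃ q : R[X], q.degree < t ∧ g = q := by
  refine ⟨trunc t g, degree_trunc_lt g t, ext fun n => ?_⟩
  rw [Polynomial.coeff_coe, coeff_trunc]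
  split_ifs with hn
  · rfl
  · exact h n (not_lt.mp hn)

end PowerSeries

lemma alphaQ_eq_sum_range (p f : ℕ) (t : ZMod f → ℤ) (s : ZMod f) :
    alphaQ p f t s = ((p : ℚ) ^ f - 1)⁻¹ * ∑ l ∈ range f, (p : ℚ) ^ l * t (s - l) := by
  rw [alphaQ]
  congr 1
  refine sum_nbij' (fun j => f - j) (fun l => f - l) ?_ ?_ ?_ ?_ fun j hj => ?_
  · intro j hj; simp only [mem_Icc] at hj; simp only [mem_range]; omega
  · intro l hl; simp only [mem_range] at hl; simp only [mem_Icc]; omega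
  · intro j hj; simp only [mem_Icc] at hj; omega
  · intro l hl; simp only [mem_range] at hl; omega
  · simp only [mem_Icc] at hj
    rw [Nat.cast_sub hj.2, ZMod.natCast_self, zero_sub, sub_neg_eq_add]

section CoefficientDynamics

variable {f : ℕ} (p : ℕ) (ti tj : ZMod f → ℕ)

-- `(s, m)` stands for the coefficient of `u^m` in `x s`; the equation for the coefficient of
-- `u^(m + tj s)` involves it and, if `IsExactStep v`, the coefficient `coeffStep v` of `x (s - 1)`.
def coeffStep (v : ZMod f × ℕ) : ZMod f × ℕ := (v.1 - 1, (v.2 + tj v.1 - ti v.1) / p)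

def IsExactStep (v : ZMod f × ℕ) : Prop := ti v.1 ≤ v.2 + tj v.1 ∧ p ∣ v.2 + tj v.1 - ti v.1

instance : DecidablePred (IsExactStep p ti tj) := fun _ => instDecidableAnd

def stepWeight {k : Type*} [Field k] (a : k) (v : ZMod f × ℕ) : k :=
  if IsExactStep p ti tj v then (if v.1 = 0 then a else 1) else 0

variable {p ti tj}

lemma coeffStep_iterate_fst (n : ℕ) (v : ZMod f × ℕ) :
    ((coeffStep p ti tj)^[n] v).1 = v.1 - n := by
  induction n with
  | zero => simp
  | succ n ih => rw [iterate_succ_apply', coeffStep, ih]; push_cast; ring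

lemma monotone_coeffStep_iterate_snd (n : ℕ) (s : ZMod f) :
    Monotone fun m => ((coeffStep p ti tj)^[n] (s, m)).2 := by
  induction n with
  | zero => exact monotone_id
  | succ n ih =>
    intro m m' hm
    simp only [iterate_succ_apply', coeffStep, coeffStep_iterate_fst]
    exact Nat.div_le_div_right (Nat.sub_le_sub_right (Nat.add_le_add_right (ih hm) _) _)

lemma dvd_of_isPeriodicPt_coeffStep {q : ℕ} {w : ZMod f × ℕ}
    (h : IsPeriodicPt (coeffStep p ti tj) q w) : f ∣ q := by
  have := congrArg Prod.fst h.eq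
  rw [coeffStep_iterate_fst, sub_eq_self] at this
  exact (ZMod.natCast_eq_zero_iff q f).mp this

lemma isPeriodicPt_coeffStep_of_mem_periodicPts {w : ZMod f × ℕ}
    (hw : w ∈ periodicPts (coeffStep p ti tj)) : IsPeriodicPt (coeffStep p ti tj) f w := by
  obtain ⟨q, hq, hqw⟩ := hw
  obtain ⟨e, rfl⟩ := dvd_of_isPeriodicPt_coeffStep hqw
  set g : ℕ → ℕ := fun m => ((coeffStep p ti tj)^[f] (w.1, m)).2
  have hsemi : Semiconj (Prod.mk w.1) g (coeffStep p ti tj)^[f] := fun m =>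
    Prod.ext (by simp [coeffStep_iterate_fst]) rfl
  have hge : g^[e] w.2 = id^[e] w.2 := by
    have := hsemi.iterate_right e w.2
    rw [← iterate_mul, hqw.eq] at this
    simpa using congrArg Prod.snd this
  have hg := (Commute.id_right.iterate_pos_eq_iff_map_eq (monotone_coeffStep_iterate_snd f w.1)
    strictMono_id (Nat.pos_of_mul_pos_left hq)).mp hge
  exact (hsemi w.2).symm.trans (congrArg _ hg)

lemma minimalPeriod_coeffStep {w : ZMod f × ℕ} (hw : w ∈ periodicPts (coeffStep p ti tj)) :
    minimalPeriod (coeffStep p ti tj) w = f :=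
  Nat.dvd_antisymm (isPeriodicPt_coeffStep_of_mem_periodicPts hw).minimalPeriod_dvd
    (dvd_of_isPeriodicPt_coeffStep (isPeriodicPt_minimalPeriod _ _))

lemma coeffStep_snd_le (hp : 2 ≤ p) {M : ℕ} (hM : ∀ s, tj s ≤ M) {v : ZMod f × ℕ}
    (hv : v.2 ≤ M) : (coeffStep p ti tj v).2 ≤ M := by
  have := Nat.div_le_div (a := v.2 + tj v.1 - ti v.1) (b := M + M) (by have := hM v.1; omega) hp
    two_ne_zero
  simp only [coeffStep]
  omega

lemma coeffStep_snd_lt (hp : 2 ≤ p) {M : ℕ} (hM : ∀ s, tj s ≤ M) {v : ZMod f × ℕ}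
    (hv : M < v.2) : (coeffStep p ti tj v).2 < v.2 := by
  have := Nat.div_le_div (a := v.2 + tj v.1 - ti v.1) (b := v.2 + M) (by have := hM v.1; omega) hp
    two_ne_zero
  simp only [coeffStep]
  omega

lemma mul_coeffStep_snd {v : ZMod f × ℕ} (h : IsExactStep p ti tj v) :
    (p : ℚ) * (coeffStep p ti tj v).2 = v.2 + tj v.1 - ti v.1 := by
  rw [coeffStep, ← Nat.cast_mul, Nat.mul_div_cancel' h.2, Nat.cast_sub h.1]
  push_cast
  ring

lemma alphaQ_sub_eq_of_isExactStep [NeZero f] (hp : 2 ≤ p) {w : ZMod f × ℕ}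
    (hw : IsPeriodicPt (coeffStep p ti tj) f w)
    (hex : ∀ l < f, IsExactStep p ti tj ((coeffStep p ti tj)^[l] w)) :
    alphaQ p f (fun s => (tj s : ℤ)) w.1 - alphaQ p f (fun s => (ti s : ℤ)) w.1 = w.2 := by
  set m : ℕ → ℚ := fun l => ((coeffStep p ti tj)^[l] w).2
  have hstep : ∀ l ∈ range f, (p : ℚ) ^ l * ((tj (w.1 - l) : ℤ) - (ti (w.1 - l) : ℤ))
      = p ^ (l + 1) * m (l + 1) - p ^ l * m l := by
    intro l hl
    have := mul_coeffStep_snd (hex l (mem_range.mp hl))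
    simp only [coeffStep_iterate_fst] at this
    simp only [m, iterate_succ_apply', pow_succ, mul_assoc, this]
    push_cast
    ring
  have hpf : (p : ℚ) ^ f - 1 ≠ 0 :=
    sub_ne_zero.mpr (one_lt_pow₀ (by exact_mod_cast hp) (NeZero.ne f)).ne'
  rw [alphaQ_eq_sum_range, alphaQ_eq_sum_range, ← mul_sub, ← sum_sub_distrib]
  simp only [← mul_sub]
  rw [sum_congr rfl hstep, sum_range_sub (fun l => (p : ℚ) ^ l * m l)]
  simp only [m, hw.eq, iterate_zero_apply, pow_zero, one_mul]
  rw [← sub_one_mul, inv_mul_cancel_left₀ hpf]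

lemma exists_nat_alphaQ_sub [NeZero f] (hp : 2 ≤ p) {w : ZMod f × ℕ}
    (hw : w ∈ periodicPts (coeffStep p ti tj))
    (hex : ∀ l < f, IsExactStep p ti tj ((coeffStep p ti tj)^[l] w)) (s : ZMod f) :
    ∃ n : ℕ, alphaQ p f (fun s => (tj s : ℤ)) s - alphaQ p f (fun s => (ti s : ℤ)) s = n := by
  have hper := isPeriodicPt_coeffStep_of_mem_periodicPts hw
  set w' := (coeffStep p ti tj)^[(w.1 - s).val] w
  have hw' : w'.1 = s := by simp [w', coeffStep_iterate_fst]
  refine ⟨w'.2, hw' ▸ alphaQ_sub_eq_of_isExactStep hp (hper.apply_iterate _) fun l _ => ?_⟩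
  rw [← iterate_add_apply, ← hper.iterate_mod_apply]
  exact hex _ (Nat.mod_lt _ (NeZero.pos f))

lemma prod_stepWeight_ne_one {k : Type*} [Field k] [NeZero f] (hp : 2 ≤ p) {ai aj : kˣ}
    (hna : ¬(ai = aj ∧ ∀ s : ZMod f, ∃ n : ℕ,
      alphaQ p f (fun s => (tj s : ℤ)) s - alphaQ p f (fun s => (ti s : ℤ)) s = n))
    {w : ZMod f × ℕ} (hw : w ∈ periodicPts (coeffStep p ti tj)) :
    ∏ l ∈ range (minimalPeriod (coeffStep p ti tj) w),
      stepWeight p ti tj ((ai : k) / aj) ((coeffStep p ti tj)^[l] w) ≠ 1 := by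
  rw [minimalPeriod_coeffStep hw]
  unfold stepWeight
  by_cases hex : ∀ l < f, IsExactStep p ti tj ((coeffStep p ti tj)^[l] w)
  · rw [prod_congr rfl fun l hl => if_pos (hex l (mem_range.mp hl))]
    simp only [coeffStep_iterate_fst]
    rw [ZMod.prod_range_sub_natCast (fun s => if s = 0 then (ai : k) / aj else 1), prod_ite_eq',
      if_pos (mem_univ _), Ne, div_eq_one_iff_eq aj.ne_zero]
    exact fun h => hna ⟨Units.ext h, exists_nat_alphaQ_sub hp hw hex⟩
  · push Not at hex
    obtain ⟨l, hl, hnex⟩ := hex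
    rw [prod_eq_zero (mem_range.mpr hl) (if_neg hnex)]
    exact zero_ne_one

end CoefficientDynamics

lemma phiPS_eq_expand {k : Type*} [Field k] {p : ℕ} (hp : p ≠ 0) :
    phiPS k p = PowerSeries.expand p hp :=
  funext fun g => PowerSeries.ext fun n => by
    rw [PowerSeries.coeff_expand, phiPS, PowerSeries.coeff_mk]

noncomputable def phiPSHom (k : Type*) [Field k] (p : ℕ) (hp : p ≠ 0) :
    PowerSeries k →+* PowerSeries k :=
  (PowerSeries.expand p hp : PowerSeries k →ₐ[k] PowerSeries k).toRingHom.copy (phiPS k p)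
    (phiPS_eq_expand hp)

section ScalarEquation

open PowerSeries
open scoped Polynomial

variable {k : Type*} [Field k] {p f : ℕ} {ti tj : ZMod f → ℕ}

theorem exists_coeffStep_solution [NeZero f] (hp : 2 ≤ p) {ai aj : kˣ}
    (hna : ¬(ai = aj ∧ ∀ s : ZMod f, ∃ n : ℕ,
      alphaQ p f (fun s => (tj s : ℤ)) s - alphaQ p f (fun s => (ti s : ℤ)) s = n))
    (G : ZMod f × ℕ → k) : ∃ y : ZMod f × ℕ → k, ∀ v,
      y v = G v + stepWeight p ti tj ((ai : k) / aj) v * y (coeffStep p ti tj v) := by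
  have hM : ∀ s, tj s ≤ univ.sup tj := fun s => le_sup (mem_univ s)
  exact exists_eq_add_mul_comp _ _ Prod.snd _
    ((Set.finite_univ.prod (Set.finite_Iic _)).subset fun v hv => ⟨trivial, hv⟩)
    (fun _ => coeffStep_snd_le hp hM) (fun _ => coeffStep_snd_lt hp hM)
    (fun _ hw => prod_stepWeight_ne_one hp hna hw) G

lemma coeff_X_pow_mul_phiPS (a n : ℕ) (g : k⟦X⟧) :
    coeff n (X ^ a * phiPS k p g) = if a ≤ n ∧ p ∣ n - a then coeff ((n - a) / p) g else 0 := by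
  rw [coeff_X_pow_mul', phiPS, coeff_mk]
  split_ifs <;> simp_all

theorem exists_add_mul_phiPS_sub_mul_eq_coe [NeZero f] (hp : 2 ≤ p) {ai aj : kˣ}
    (hna : ¬(ai = aj ∧ ∀ s : ZMod f, ∃ n : ℕ,
      alphaQ p f (fun s => (tj s : ℤ)) s - alphaQ p f (fun s => (ti s : ℤ)) s = n))
    (c : ZMod f → k⟦X⟧) : ∃ x : ZMod f → k⟦X⟧, ∀ s, ∃ q : k[X], q.degree < tj s ∧
      c s + C (if s = 0 then (ai : k) else 1) * X ^ ti s * phiPS k p (x (s - 1))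
        - x s * (C (if s = 0 then (aj : k) else 1) * X ^ tj s) = (q : k⟦X⟧) := by
  set β : ZMod f → k := fun s => if s = 0 then (aj : k) else 1
  obtain ⟨y, hy⟩ := exists_coeffStep_solution hp hna
    fun v => (β v.1)⁻¹ * coeff (v.2 + tj v.1) (c v.1)
  refine ⟨fun s => mk fun m => y (s, m), fun s => exists_degree_lt_eq_coe fun n hn => ?_⟩
  obtain ⟨m, rfl⟩ := Nat.exists_eq_add_of_le' hn
  rw [map_sub, map_add, mul_assoc, coeff_C_mul, coeff_X_pow_mul_phiPS, mul_left_comm, coeff_C_mul,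
    coeff_mul_X_pow]
  simp only [coeff_mk]
  rw [hy (s, m)]
  simp only [stepWeight, coeffStep, IsExactStep, β]
  split_ifs <;> field_simp <;> ring

end ScalarEquation

theorem stmt3_general {k : Type*} [Field k] {p f d : ℕ} (hp2 : 2 < p)
    (hf : 1 ≤ f)
    (t : Fin d → ZMod f → ℕ) (a : Fin d → kˣ)
    (hnomorph : ∀ i j : Fin d, i < j →
      ¬(a i = a j ∧ ∀ s : ZMod f, ∃ n : ℕ,
        alphaQ p f (fun s' => (t j s' : ℤ)) s - alphaQ p f (fun s' => (t i s' : ℤ)) s = n)) :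
    ∀ B : ZMod f → Matrix (Fin d) (Fin d) (PowerSeries k),
      (∀ s, ∀ i j : Fin d, j < i → B s i j = 0) →
      (∀ s, ∀ i : Fin d, B s i i
          = PowerSeries.C (if s = 0 then (a i : k) else 1) * PowerSeries.X ^ (t i s)) →
      ∃ T T' : ZMod f → Matrix (Fin d) (Fin d) (PowerSeries k),
        (∀ s, T s * T' s = 1 ∧ T' s * T s = 1) ∧
        (∀ s, ∀ i j : Fin d, j < i → T s i j = 0) ∧
        (∀ s, ∀ i : Fin d, T s i i = 1) ∧
        (∀ s,
          (∀ i j : Fin d, j < i → (T' s * B s * (T (s - 1)).map (phiPS k p)) i j = 0) ∧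
          (∀ i : Fin d, (T' s * B s * (T (s - 1)).map (phiPS k p)) i i
              = PowerSeries.C (if s = 0 then (a i : k) else 1) * PowerSeries.X ^ (t i s)) ∧
          (∀ i j : Fin d, i < j → ∃ q : Polynomial k, q.degree < (t j s : WithBot ℕ) ∧
            (T' s * B s * (T (s - 1)).map (phiPS k p)) i j
              = Polynomial.coeToPowerSeries.ringHom q)) := by
  intro B hBlow hBdiag
  have : NeZero f := ⟨by omega⟩
  obtain ⟨T, hT⟩ := exists_unitriangular_reduction (phiPSHom k p (by omega))
    (fun i s => PowerSeries.C (if s = 0 then (a i : k) else 1) * PowerSeries.X ^ (t i s))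
    (fun j s r => ∃ q : Polynomial k, q.degree < (t j s : WithBot ℕ) ∧
      r = Polynomial.coeToPowerSeries.ringHom q)
    (fun i j hij => exists_add_mul_phiPS_sub_mul_eq_coe (by omega) (hnomorph i j hij))
    (fun j s => ⟨0, by simp⟩) B hBlow hBdiag
  have hunit s : IsUnit (T s).det := isUnit_det_of_unitriangular (hT s).1 (hT s).2.1
  exact ⟨T, fun s => (T s)⁻¹, fun s => ⟨mul_nonsing_inv _ (hunit s), nonsing_inv_mul _ (hunit s)⟩,
    fun s => (hT s).1, fun s => (hT s).2.1, fun s => (hT s).2.2⟩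

/-- matrix form of Proposition `extKisin` of the paper, in the case
where there is no nonzero morphism between the rank-one graded pieces. -/
theorem stmt3 {k : Type*} [Field k] {p f d : ℕ} (hp : p.Prime) (hp2 : 2 < p)
    (hf : 1 ≤ f) (hd : 1 ≤ d)
    (t : Fin d → ZMod f → ℕ) (a : Fin d → kˣ)
    (hnomorph : ∀ i j : Fin d, i < j →
      ¬(a i = a j ∧ ∀ s : ZMod f, ∃ n : ℕ,
        alphaQ p f (fun s' => (t j s' : ℤ)) s - alphaQ p f (fun s' => (t i s' : ℤ)) s = n)) :
    ∀ B : ZMod f → Matrix (Fin d) (Fin d) (PowerSeries k),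
      (∀ s, ∀ i j : Fin d, j < i → B s i j = 0) →
      (∀ s, ∀ i : Fin d, B s i i
          = PowerSeries.C (if s = 0 then (a i : k) else 1) * PowerSeries.X ^ (t i s)) →
      ∃ T T' : ZMod f → Matrix (Fin d) (Fin d) (PowerSeries k),
        (∀ s, T s * T' s = 1 ∧ T' s * T s = 1) ∧
        (∀ s, ∀ i j : Fin d, j < i → T s i j = 0) ∧
        (∀ s, ∀ i : Fin d, T s i i = 1) ∧
        (∀ s,
          (∀ i j : Fin d, j < i → (T' s * B s * (T (s - 1)).map (phiPS k p)) i j = 0) ∧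
          (∀ i : Fin d, (T' s * B s * (T (s - 1)).map (phiPS k p)) i i
              = PowerSeries.C (if s = 0 then (a i : k) else 1) * PowerSeries.X ^ (t i s)) ∧
          (∀ i j : Fin d, i < j → ∃ q : Polynomial k, q.degree < (t j s : WithBot ℕ) ∧
            (T' s * B s * (T (s - 1)).map (phiPS k p)) i j
              = Polynomial.coeToPowerSeries.ringHom q)) :=
  stmt3_general hp2 hf t a hnomorph
end

section
/- Let k be a field and t_1, ..., t_d distinct integers with 0 ≤ t_i ≤ p for an odd prime p, and assume t_d is the maximal element of {t_1, ..., t_d}. Let X be a d×d upper triangular matrix over k[u] with i-th diagonal entry u^{t_i} and with (i,j)-entries x_{i,j} of degree strictly less than t_j for i < j, and let A ∈ GL_d(k). If for every i the power u^{t_i} divides every entry of the i-th column of X·A, then for all i < j one has x_{i,j} = u^{t_i}·y_{i,j} with y_{i,j} = 0 when t_j < t_i and y_{i,j} a constant in k when t_j > t_i. -/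
/-!
Let `W_m ⊆ kᵈ` be the space of row vectors `v` such that `v A` vanishes at every `i` with
`m < t_i`; since `A` is invertible, `dim W_m ≤ #{i | t_i ≤ m}`. The divisibility hypothesis says
exactly that the `u^m`-coefficient vector of every row of `X` lies in `W_m`. For `t_s ≤ m` the
`u^{t_s}`-coefficient vectors of the rows `s` lie in `W_{t_s} ⊆ W_m` and are in echelon form with
pivot `1` at `s`, so they form a basis of `W_m`. For `m ≠ t_r` the `u^m`-coefficient vector of
row `r` vanishes at every pivot by the degree bounds, hence vanishes: `x_{r,j}` is a constant
multiple of `u^{t_r}`.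
-/

open Polynomial Module Matrix

section Echelon

variable {k ι : Type*} [Field k] [Fintype ι] [LinearOrder ι]

theorem Finset.echelon_combination_eq_zero (S : Finset ι) {w : ι → ι → k}
    (hw_diag : ∀ s ∈ S, w s s = 1) (hw_lower : ∀ s ∈ S, ∀ j < s, w s j = 0)
    (c : S → k) (hc : ∀ s : S, (∑ s' : S, c s' • w s') s = 0) : c = 0 := by
  funext s
  induction s using WellFoundedLT.induction with
  | _ s ih =>
    have hs := hc s
    rw [Finset.sum_apply, Finset.sum_eq_single s] at hs
    · simpa [hw_diag s s.2] using hs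
    · intro s' _ hne
      rcases lt_or_gt_of_ne hne with hlt | hgt
      · simp [ih s' hlt]
      · simp [hw_lower s' s'.2 s hgt]
    · simp

theorem Submodule.eq_zero_of_echelon_of_finrank_le (W : Submodule k (ι → k)) (S : Finset ι)
    (hW : finrank k W ≤ S.card) {w : ι → ι → k} (hw_mem : ∀ s ∈ S, w s ∈ W)
    (hw_diag : ∀ s ∈ S, w s s = 1) (hw_lower : ∀ s ∈ S, ∀ j < s, w s j = 0)
    {v : ι → k} (hv : v ∈ W) (hvS : ∀ s ∈ S, v s = 0) : v = 0 := by
  have hli : LinearIndependent k (fun s : S => w s) :=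
    Fintype.linearIndependent_iff.2 fun c hc s =>
      congrFun (S.echelon_combination_eq_zero hw_diag hw_lower c fun s => by rw [hc]; rfl) s
  have hspan : span k (Set.range fun s : S => w s) = W :=
    eq_of_le_of_finrank_le (span_le.2 (Set.range_subset_iff.2 fun s => hw_mem s s.2))
      (by rwa [finrank_span_eq_card hli, Fintype.card_coe])
  obtain ⟨c, rfl⟩ := (mem_span_range_iff_exists_fun k).1 (hspan ▸ hv)
  simp [S.echelon_combination_eq_zero hw_diag hw_lower c fun s => hvS s s.2]

theorem Matrix.finrank_comap_vecMulLinear_pi_bot_le {A : Matrix ι ι k} (hA : IsUnit A.det)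
    (S : Finset ι) :
    finrank k ((Submodule.pi (↑S)ᶜ fun _ => ⊥).comap A.vecMulLinear) ≤ S.card := by
  set W := (Submodule.pi (↑S)ᶜ fun _ => (⊥ : Submodule k k)).comap A.vecMulLinear
  let f : W →ₗ[k] S → k := LinearMap.funLeft k k Subtype.val ∘ₗ A.vecMulLinear ∘ₗ W.subtype
  have hf : Function.Injective f := by
    rw [← LinearMap.ker_eq_bot, LinearMap.ker_eq_bot']
    intro v hv
    have hvW : ∀ i ∉ S, (v.1 ᵥ* A) i = 0 := by
      have hvmem := v.2
      simp only [W, Submodule.mem_comap, Submodule.mem_pi, Submodule.mem_bot] at hvmem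
      exact hvmem
    have : v.1 ᵥ* A = 0 := by
      funext i
      by_cases hi : i ∈ S
      · simpa [f] using congrFun hv ⟨i, hi⟩
      · exact hvW i hi
    exact Subtype.ext ((Matrix.vecMul_injective_iff_isUnit.2 ((A.isUnit_iff_isUnit_det).2 hA))
      (this.trans (Matrix.zero_vecMul A).symm))
  simpa using LinearMap.finrank_le_finrank_of_injective hf

end Echelon

theorem Matrix.coeff_mul_map_C_apply {k ι κ : Type*} [Field k] [Fintype ι]
    (M : Matrix κ ι k[X]) (A : Matrix ι ι k) (r : κ) (i : ι) (m : ℕ) :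
    ((M * A.map C) r i).coeff m = ((fun j => (M r j).coeff m) ᵥ* A) i := by
  simp [Matrix.mul_apply, Matrix.vecMul, dotProduct, coeff_mul_C]

theorem coeff_eq_zero_of_ne_of_X_pow_dvd_mul {k ι : Type*} [Field k] [Fintype ι]
    [LinearOrder ι] {t : ι → ℕ} {M : Matrix ι ι k[X]}
    (hM_lower : ∀ i j, j < i → M i j = 0) (hM_diag : ∀ i, M i i = X ^ t i)
    (hM_deg : ∀ i j, i < j → (M i j).degree < t j)
    {A : Matrix ι ι k} (hA : IsUnit A.det) (hdvd : ∀ i j, X ^ t i ∣ (M * A.map C) j i)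
    {r : ι} {m : ℕ} (hm : m ≠ t r) (j : ι) : (M r j).coeff m = 0 := by
  set S := Finset.univ.filter fun s => t s ≤ m
  set W := (Submodule.pi (↑S)ᶜ fun _ => (⊥ : Submodule k k)).comap A.vecMulLinear
  have coeff_mem : ∀ r' m', m' ≤ m → (fun j => (M r' j).coeff m') ∈ W := by
    simp only [W, S, Submodule.mem_comap, Submodule.mem_pi, Submodule.mem_bot]
    intro r' m' hm' i hi
    rw [vecMulLinear_apply, ← M.coeff_mul_map_C_apply]
    exact X_pow_dvd_iff.1 (hdvd i r') m' (by simp at hi; omega)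
  have hrow := W.eq_zero_of_echelon_of_finrank_le S (finrank_comap_vecMulLinear_pi_bot_le hA S)
    (w := fun s j => (M s j).coeff (t s))
    (fun s hs => coeff_mem s (t s) (by simpa [S] using hs))
    (fun s _ => by simp [hM_diag])
    (fun s _ j hj => by simp [hM_lower s j hj])
    (coeff_mem r m le_rfl) (fun s hs => ?_)
  · exact congrFun hrow j
  have hts : t s ≤ m := by simpa [S] using hs
  rcases lt_trichotomy s r with hlt | rfl | hgt
  · simp [hM_lower r s hlt]
  · simp [hM_diag, hm]
  · exact coeff_eq_zero_of_degree_lt ((hM_deg r s hgt).trans_le (by exact_mod_cast hts))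

theorem stmt4_general {k : Type*} [Field k] {n : ℕ}
    (t : Fin (n + 1) → ℕ)
    (X : Matrix (Fin (n + 1)) (Fin (n + 1)) (Polynomial k))
    (hX_lower : ∀ i j : Fin (n + 1), j < i → X i j = 0)
    (hX_diag : ∀ i : Fin (n + 1), X i i = Polynomial.X ^ (t i))
    (hX_deg : ∀ i j : Fin (n + 1), i < j → (X i j).degree < (t j : WithBot ℕ))
    (A : Matrix (Fin (n + 1)) (Fin (n + 1)) k) (hA : IsUnit A.det)
    (hdvd : ∀ i j : Fin (n + 1),
      (Polynomial.X : Polynomial k) ^ (t i) ∣ (X * A.map Polynomial.C) j i) :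
    ∀ i j : Fin (n + 1), i < j → ∃ y : k,
      X i j = Polynomial.C y * Polynomial.X ^ (t i) ∧ (t j < t i → y = 0) := by
  intro i j hij
  refine ⟨(X i j).coeff (t i), ?_, fun hlt => ?_⟩
  · ext m
    rw [coeff_C_mul_X_pow]
    split_ifs with hm
    · rw [hm]
    · exact coeff_eq_zero_of_ne_of_X_pow_dvd_mul hX_lower hX_diag hX_deg hA hdvd hm j
  · exact coeff_eq_zero_of_degree_lt ((hX_deg i j hij).trans (by exact_mod_cast hlt))

/-- Sublemma 4.3 of the paper: the case of the key matrix lemma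
in which the last exponent `t_d` is maximal. -/
theorem stmt4 {k : Type*} [Field k] {p n : ℕ} (hp : p.Prime) (hodd : Odd p)
    (t : Fin (n + 1) → ℕ) (ht_inj : Function.Injective t) (ht_le : ∀ i, t i ≤ p)
    (hmax : ∀ i, t i ≤ t (Fin.last n))
    (X : Matrix (Fin (n + 1)) (Fin (n + 1)) (Polynomial k))
    (hX_lower : ∀ i j : Fin (n + 1), j < i → X i j = 0)
    (hX_diag : ∀ i : Fin (n + 1), X i i = Polynomial.X ^ (t i))
    (hX_deg : ∀ i j : Fin (n + 1), i < j → (X i j).degree < (t j : WithBot ℕ))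
    (A : Matrix (Fin (n + 1)) (Fin (n + 1)) k) (hA : IsUnit A.det)
    (hdvd : ∀ i j : Fin (n + 1),
      (Polynomial.X : Polynomial k) ^ (t i) ∣ (X * A.map Polynomial.C) j i) :
    ∀ i j : Fin (n + 1), i < j → ∃ y : k,
      X i j = Polynomial.C y * Polynomial.X ^ (t i) ∧ (t j < t i → y = 0) :=
  stmt4_general t X hX_lower hX_diag hX_deg A hA hdvd
end

section
/- Let k be a field and t_1, ..., t_d distinct integers with 0 ≤ t_i ≤ p for an odd prime p, and assume t_1 is the maximal element of {t_1, ..., t_d}. Let X be a d×d upper triangular matrix over k[u] with i-th diagonal entry u^{t_i} and with (i,j)-entries x_{i,j} of degree strictly less than t_j for i < j, and let A ∈ GL_d(k). If for every i the power u^{t_i} divides every entry of the i-th column of X·A, then for all i < j one has x_{i,j} = u^{t_i}·y_{i,j} with y_{i,j} = 0 when t_j < t_i and y_{i,j} a constant in k when t_j > t_i. (In this situation t_j < t_1 for all j > 1, so in fact x_{1,j} = 0 for all j > 1.) -/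
open Polynomial

/-- Core linear-algebra lemma: if `A` is invertible, the rows `Y l` (for `l` with
`t l ≤ m`) are unitriangular and satisfy `(Y l * A) c = 0` for all `c` with `m < t c`,
and `ξ` vanishes on `{j : t j ≤ m}` with `(ξ A) c = 0` for `m < t c`, then `ξ = 0`. -/
lemma stmt5_core {k : Type*} [Field k] {N : ℕ}
    (A : Matrix (Fin N) (Fin N) k) (hA : IsUnit A.det)
    (t : Fin N → ℕ) (m : ℕ) (Y : Fin N → Fin N → k)
    (hYd : ∀ l, Y l l = 1) (hYl : ∀ l j : Fin N, j < l → Y l j = 0)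
    (hYA : ∀ l c : Fin N, t l ≤ m → m < t c → ∑ j, Y l j * A j c = 0)
    (ξ : Fin N → k) (hξ0 : ∀ j, t j ≤ m → ξ j = 0)
    (hξA : ∀ c, m < t c → ∑ j, ξ j * A j c = 0) :
    ξ = 0 := by
  classical
  set S := {l : Fin N // t l ≤ m} with hS
  let v : Option S → (Fin N → k) := fun o => Option.elim o ξ (fun l => Y l.1)
  let w : Option S → (S → k) := fun o s => ∑ j, v o j * A j s.1
  have hdep : ¬ LinearIndependent k w := by
    intro h
    have hle := h.fintype_card_le_finrank
    rw [Module.finrank_fintype_fun_eq_card] at hle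
    rw [Fintype.card_option] at hle
    omega
  obtain ⟨g, hg, i0, hi0⟩ := Fintype.not_linearIndependent_iff.mp hdep
  -- the relation holds at every coordinate, not just those in `S`
  have hfull : ∀ c : Fin N, ∑ i : Option S, g i * (∑ j, v i j * A j c) = 0 := by
    intro c
    by_cases hc : t c ≤ m
    · have := congrFun hg ⟨c, hc⟩
      simpa [w, Finset.sum_apply] using this
    · push_neg at hc
      refine Finset.sum_eq_zero fun i _ => ?_
      have hz : (∑ j, v i j * A j c) = 0 := by
        match i with
        | none => exact hξA c hc
        | some l => exact hYA l.1 c l.2 hc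
      rw [hz, mul_zero]
  -- transport the relation through the invertible matrix `A`
  have hv : ∀ j : Fin N, ∑ i : Option S, g i * v i j = 0 := by
    set uvec : Fin N → k := fun j => ∑ i : Option S, g i * v i j with hu
    have hWA : Matrix.vecMul uvec A = 0 := by
      funext c
      have heq : ∑ j, (∑ i : Option S, g i * v i j) * A j c
          = ∑ i : Option S, g i * (∑ j, v i j * A j c) := by
        calc ∑ j, (∑ i : Option S, g i * v i j) * A j c
            = ∑ j, ∑ i : Option S, g i * (v i j * A j c) := by
              refine Finset.sum_congr rfl fun j _ => ?_
              rw [Finset.sum_mul]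
              exact Finset.sum_congr rfl fun i _ => mul_assoc _ _ _
          _ = ∑ i : Option S, ∑ j, g i * (v i j * A j c) := Finset.sum_comm
          _ = ∑ i : Option S, g i * (∑ j, v i j * A j c) := by
              exact Finset.sum_congr rfl fun i _ => (Finset.mul_sum _ _ _).symm
      show ∑ j, uvec j * A j c = 0
      rw [heq, hfull c]
    have huz : uvec = 0 := by
      have hinv : A * A⁻¹ = 1 := Matrix.mul_nonsing_inv A hA
      calc uvec = Matrix.vecMul uvec (A * A⁻¹) := by rw [hinv, Matrix.vecMul_one]
        _ = Matrix.vecMul (Matrix.vecMul uvec A) A⁻¹ := by rw [Matrix.vecMul_vecMul]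
        _ = 0 := by rw [hWA, Matrix.zero_vecMul]
    intro j
    exact congrFun huz j
  -- all coefficients `g (some s)` vanish, by strong induction on the index
  have H : ∀ q : ℕ, ∀ s : S, (s.1 : ℕ) < q → g (some s) = 0 := by
    intro q
    induction q with
    | zero => intro s hsq; omega
    | succ q ih =>
      intro s hsq
      have h := hv s.1
      rw [Fintype.sum_option] at h
      have hsum : ∑ s' : S, g (some s') * v (some s') s.1 = g (some s) := by
        rw [Finset.sum_eq_single s]
        · simp only [v, Option.elim]
          rw [hYd]; ring
        · intro s' _ hne
          rcases lt_trichotomy (s'.1 : ℕ) (s.1 : ℕ) with hlt | heq | hgt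
          · rw [ih s' (by omega)]; ring
          · exact absurd (Subtype.ext (Fin.ext heq)) hne
          · have : v (some s') s.1 = 0 := hYl s'.1 s.1 (by exact hgt)
            rw [this, mul_zero]
        · intro hmem; exact absurd (Finset.mem_univ s) hmem
      rw [hsum] at h
      have hx : v none s.1 = 0 := hξ0 s.1 s.2
      rw [hx, mul_zero, zero_add] at h
      exact h
  have hg0 : ∀ s : S, g (some s) = 0 := fun s => H ((s.1 : ℕ) + 1) s (Nat.lt_succ_self _)
  have hgnone : g none ≠ 0 := by
    match i0, hi0 with
    | none, h => exact h
    | some s, h => exact absurd (hg0 s) h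
  funext j
  have h := hv j
  rw [Fintype.sum_option] at h
  have : ∑ s : S, g (some s) * v (some s) j = 0 :=
    Finset.sum_eq_zero fun s _ => by rw [hg0 s, zero_mul]
  rw [this, add_zero] at h
  have hz : v none j = 0 := by
    rcases mul_eq_zero.mp h with h' | h'
    · exact absurd h' hgnone
    · exact h'
  exact hz

/-- Sublemma 4.4 of the paper: the case of the key matrix lemma
in which the first exponent `t_1` is maximal; in this case moreover the whole first
row above the diagonal vanishes. -/
theorem stmt5 {k : Type*} [Field k] {p n : ℕ} (hp : p.Prime) (hodd : Odd p)
    (t : Fin (n + 1) → ℕ) (ht_inj : Function.Injective t) (ht_le : ∀ i, t i ≤ p)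
    (hmax : ∀ i, t i ≤ t 0)
    (X : Matrix (Fin (n + 1)) (Fin (n + 1)) (Polynomial k))
    (hX_lower : ∀ i j : Fin (n + 1), j < i → X i j = 0)
    (hX_diag : ∀ i : Fin (n + 1), X i i = Polynomial.X ^ (t i))
    (hX_deg : ∀ i j : Fin (n + 1), i < j → (X i j).degree < (t j : WithBot ℕ))
    (A : Matrix (Fin (n + 1)) (Fin (n + 1)) k) (hA : IsUnit A.det)
    (hdvd : ∀ i j : Fin (n + 1),
      (Polynomial.X : Polynomial k) ^ (t i) ∣ (X * A.map Polynomial.C) j i) :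
    (∀ i j : Fin (n + 1), i < j → ∃ y : k,
      X i j = Polynomial.C y * Polynomial.X ^ (t i) ∧ (t j < t i → y = 0)) ∧
    (∀ j : Fin (n + 1), 0 < j → X 0 j = 0) := by
  classical
  -- coefficient form of the divisibility hypothesis
  have hcoeffP : ∀ (l c : Fin (n + 1)) (d : ℕ), d < t c →
      (∑ jj, (X l jj).coeff d * A jj c) = 0 := by
    intro l c d hd
    have h1 : ((X * A.map Polynomial.C) l c).coeff d = 0 :=
      (Polynomial.X_pow_dvd_iff.mp (hdvd c l)) d hd
    rw [Matrix.mul_apply, Polynomial.finset_sum_coeff] at h1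
    simpa [Matrix.map_apply, Polynomial.coeff_mul_C] using h1
  -- every coefficient of `X i j` away from degree `t i` vanishes
  have key : ∀ (i j : Fin (n + 1)) (m : ℕ), m ≠ t i → (X i j).coeff m = 0 := by
    intro i j m hm
    have hcore := stmt5_core A hA t m (fun l j' => (X l j').coeff (t l))
      (fun l => by show (X l l).coeff (t l) = 1; rw [hX_diag l]; simp [Polynomial.coeff_X_pow])
      (fun l j' hj' => by show (X l j').coeff (t l) = 0; rw [hX_lower l j' hj']; simp)
      (fun l c hl hc => hcoeffP l c (t l) (lt_of_le_of_lt hl hc))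
      (fun j' => (X i j').coeff m)
      (fun j' hj' => by
        show (X i j').coeff m = 0
        rcases lt_trichotomy j' i with h | h | h
        · rw [hX_lower i j' h]; simp
        · subst h; rw [hX_diag j']; simp [Polynomial.coeff_X_pow, hm]
        · refine Polynomial.coeff_eq_zero_of_degree_lt ?_
          refine lt_of_lt_of_le (hX_deg i j' h) ?_
          exact_mod_cast Nat.cast_le.mpr hj')
      (fun c hc => hcoeffP i c m hc)
    exact congrFun hcore j
  have main : ∀ i j : Fin (n + 1), i < j → ∃ y : k,
      X i j = Polynomial.C y * Polynomial.X ^ (t i) ∧ (t j < t i → y = 0) := by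
    intro i j hij
    refine ⟨(X i j).coeff (t i), ?_, ?_⟩
    · apply Polynomial.ext
      intro d
      rw [Polynomial.coeff_C_mul, Polynomial.coeff_X_pow]
      by_cases hd : d = t i
      · subst hd; simp
      · rw [if_neg hd, mul_zero]
        exact key i j d hd
    · intro hlt
      refine Polynomial.coeff_eq_zero_of_degree_lt ?_
      refine lt_trans (hX_deg i j hij) ?_
      exact_mod_cast Nat.cast_lt.mpr hlt
  refine ⟨main, fun j hj => ?_⟩
  have hj0 : j ≠ 0 := Fin.ne_of_gt hj
  have htj : t j < t 0 :=
    lt_of_le_of_ne (hmax j) (fun h => hj0 (ht_inj h))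
  obtain ⟨y, h1, h2⟩ := main 0 j hj
  rw [h1, h2 htj]
  simp
end

section
/- Let p > 2 be a prime and f ≥ 1 an integer. Let t_0, ..., t_{f−1} be integers with −p ≤ t_s ≤ p for all s, and suppose Σ_{s=0}^{f−1} p^{f−1−s} t_s ≡ 0 (mod p^f − 1). Then one of the following holds: (1) there is ε ∈ {1, −1} such that t_s = ε(p−1) for every s; or (2) there is a partition of the cyclic index set ℤ/fℤ into nonempty cyclic intervals (sets of the form {a, a+1, ..., a+ℓ−1} taken mod f) such that on each interval of the partition either t is identically 0, or the interval has length ℓ ≥ 2 and there is ε ∈ {1, −1} with t_a = −ε, t_{a+ℓ−1} = ε·p, and t_{a+m} = ε(p−1) for all 0 < m < ℓ−1 (the case ℓ = 2, with no (p−1)-entries, being allowed). -/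
/-!
Put `S a = ∑ₛ p^(f-1-s) t (a + s)`, the value of the cyclically rotated digit string. Rotating
by one gives `S (a + 1) = p S a - (p^f - 1) t a`, so the hypothesis `(p^f - 1) ∣ S 0` propagates
to every `S a`, and `|S a| ≤ p (p^f - 1)/(p - 1) < 2 (p^f - 1)` because `p > 2`. Hence
`S a = σ a (p^f - 1)` with a carry `σ a ∈ {-1, 0, 1}`, and the recursion becomes
`t a = p σ a - σ (a + 1)`. The bound `|t a| ≤ p` forbids a carry to change sign without passing
through `0`, so σ is either a nonzero constant (case (1)) or its zeros cut `ℤ/fℤ` into intervals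
on which σ is `0, ε, …, ε` and `t` is `0` or `(-ε, ε(p-1), …, ε(p-1), εp)` (case (2)).
-/

open Finset

section CyclicDigitSum

variable {R : Type*} {f : ℕ}

def cyclicDigitSum [CommRing R] (P : R) (t : ZMod f → R) (a : ZMod f) : R :=
  ∑ s ∈ range f, P ^ (f - 1 - s) * t (a + s)

lemma cyclicDigitSum_add_one [CommRing R] (P : R) (t : ZMod f → R) (a : ZMod f) :
    cyclicDigitSum P t (a + 1) = P * cyclicDigitSum P t a - (P ^ f - 1) * t a := by
  rcases f with _ | g
  · simp [cyclicDigitSum]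
  have hlast : a + 1 + (g : ZMod (g + 1)) = a := by
    rw [add_assoc, add_comm (1 : ZMod (g + 1)), ← Nat.cast_succ, ZMod.natCast_self, add_zero]
  have hshift : ∀ s ∈ range g,
      P * (P ^ (g + 1 - 1 - (s + 1)) * t (a + ((s + 1 : ℕ) : ZMod (g + 1)))) =
        P ^ (g + 1 - 1 - s) * t (a + 1 + s) := by
    intro s hs
    rw [← mul_assoc, ← pow_succ', show g + 1 - 1 - (s + 1) + 1 = g + 1 - 1 - s by
      rw [mem_range] at hs; omega, Nat.cast_succ, add_comm (s : ZMod (g + 1)), add_assoc]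
  simp only [cyclicDigitSum, mul_sum]
  rw [sum_range_succ, sum_range_succ', sum_congr rfl hshift, hlast]
  simp only [add_tsub_cancel_right, tsub_self, pow_zero, one_mul, tsub_zero, Nat.cast_zero,
    add_zero]
  ring

lemma dvd_cyclicDigitSum [CommRing R] {P : R} {t : ZMod f → R}
    (h : P ^ f - 1 ∣ cyclicDigitSum P t 0) (a : ZMod f) :
    P ^ f - 1 ∣ cyclicDigitSum P t a := by
  rcases f with _ | g
  · simp [cyclicDigitSum]
  suffices ∀ k : ℕ, P ^ (g + 1) - 1 ∣ cyclicDigitSum P t k by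
    simpa using this a.val
  intro k
  induction k with
  | zero => simpa using h
  | succ k ih =>
    rw [Nat.cast_succ, cyclicDigitSum_add_one]
    exact dvd_sub (ih.mul_left P) (dvd_mul_right _ _)

lemma abs_cyclicDigitSum_le [CommRing R] [LinearOrder R] [IsStrictOrderedRing R] {P : R}
    (hP : 0 ≤ P) {t : ZMod f → R} {B : R} (ht : ∀ s, |t s| ≤ B) (a : ZMod f) :
    |cyclicDigitSum P t a| ≤ B * ∑ j ∈ range f, P ^ j := by
  calc |cyclicDigitSum P t a| ≤ ∑ s ∈ range f, |P ^ (f - 1 - s) * t (a + s)| :=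
        abs_sum_le_sum_abs _ _
    _ ≤ ∑ s ∈ range f, P ^ (f - 1 - s) * B := by
        gcongr with s
        rw [abs_mul, abs_of_nonneg (pow_nonneg hP _)]
        exact mul_le_mul_of_nonneg_left (ht _) (pow_nonneg hP _)
    _ = B * ∑ j ∈ range f, P ^ j := by
        rw [← sum_mul, mul_comm, sum_range_reflect (fun j => P ^ j) f]

end CyclicDigitSum

section BlockChain

variable {M : Type*} [AddMonoidWithOne M]

lemma apply_add_natCast_eq_of_forall_ne_zero {α : Type*} [Zero α] {σ : M → α}
    (hσ : ∀ a, σ a ≠ 0 → σ (a + 1) ≠ 0 → σ (a + 1) = σ a) {b : M} :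
    ∀ {k : ℕ}, (∀ j ≤ k, σ (b + j) ≠ 0) → σ (b + k) = σ b
  | 0, _ => by simp
  | k + 1, h => by
    rw [Nat.cast_succ, ← add_assoc,
      hσ _ (h k (by omega)) (by simpa [add_assoc] using h (k + 1) le_rfl),
      apply_add_natCast_eq_of_forall_ne_zero hσ fun j hj => h j (by omega)]

def IsBlockChain (Q : M → ℕ → Prop) : M → List ℕ → Prop
  | _, [] => True
  | b, l :: L => 1 ≤ l ∧ Q b l ∧ IsBlockChain Q (b + l) L

lemma IsBlockChain.getElem {Q : M → ℕ → Prop} :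
    ∀ {b : M} {L : List ℕ}, IsBlockChain Q b L →
      ∀ i (hi : i < L.length), 1 ≤ L[i] ∧ Q (b + (L.take i).sum) L[i]
  | _, [], _, i, hi => absurd hi (by simp)
  | _, _ :: _, ⟨hl, hQ, _⟩, 0, _ => by simpa using ⟨hl, hQ⟩
  | b, l :: L, ⟨_, _, hL⟩, i + 1, hi => by
    simpa [add_assoc] using hL.getElem i (by simpa using hi)

lemma IsBlockChain.exists_fin {Q : M → ℕ → Prop} {b : M} {L : List ℕ}
    (hL : IsBlockChain Q b L) (hne : L ≠ []) (hsum : ((L.sum : ℕ) : M) = 0) :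
    ∃ n : ℕ, ∃ a : Fin (n + 1) → M, ∃ ℓ : Fin (n + 1) → ℕ,
      (∀ m, 1 ≤ ℓ m) ∧ ∑ m, ℓ m = L.sum ∧ (∀ m, a (m + 1) = a m + ℓ m) ∧
      ∀ m, Q (a m) (ℓ m) := by
  obtain ⟨n, hn⟩ : ∃ n, L.length = n + 1 := Nat.exists_eq_add_one.2 (List.length_pos_iff.2 hne)
  refine ⟨n, fun m => b + (L.take m).sum, fun m => L[m.val],
    fun m => (hL.getElem m (by omega)).1, ?_, fun m => ?_, fun m => (hL.getElem m (by omega)).2⟩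
  · rw [← Fin.sum_univ_getElem L]
    exact Fintype.sum_equiv (finCongr hn.symm) _ _ fun m => rfl
  · have htake : ((L.take (m + 1)).sum : M) = (L.take m).sum + L[m.val] := by
      rw [List.sum_take_succ, Nat.cast_add]
    rcases eq_or_ne m (Fin.last n) with rfl | hm
    · rw [Fin.last_add_one, add_assoc, ← htake, Fin.val_last, List.take_of_length_le hn.le, hsum]
      simp
    · simp [Fin.val_add_one, hm, htake, add_assoc]

end BlockChain

section Carry

variable {f : ℕ} {P : ℤ} {σ t : ZMod f → ℤ}

theorem exists_carry [NeZero f] (hP : 2 < P) (hbound : ∀ s, |t s| ≤ P)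
    (hdvd : P ^ f - 1 ∣ cyclicDigitSum P t 0) :
    ∃ σ : ZMod f → ℤ, (∀ a, |σ a| ≤ 1) ∧ ∀ a, t a = P * σ a - σ (a + 1) := by
  have hD : 0 < P ^ f - 1 := sub_pos.2 (one_lt_pow₀ (by omega : 1 < P) (NeZero.ne f))
  have hGD : (∑ j ∈ range f, P ^ j) * (P - 1) = P ^ f - 1 := geom_sum_mul P f
  choose σ hσ using fun a => dvd_cyclicDigitSum hdvd a
  refine ⟨σ, fun a => ?_, fun a => ?_⟩
  · -- `|S a| ≤ P G < 2 (P - 1) G = 2 (P ^ f - 1)` for the geometric sum `G`, as `P > 2`.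
    have hS := abs_cyclicDigitSum_le (by omega : 0 ≤ P) hbound a
    rw [hσ, abs_mul, abs_of_pos hD] at hS
    have hG : 0 < ∑ j ∈ range f, P ^ j := by nlinarith
    have : |σ a| < 2 := by nlinarith
    omega
  · have h := cyclicDigitSum_add_one P t a
    rw [hσ, hσ] at h
    have : (P ^ f - 1) * (t a - (P * σ a - σ (a + 1))) = 0 := by linear_combination h
    linarith [(mul_eq_zero.1 this).resolve_left hD.ne']

lemma carry_add_one_eq_of_ne_zero (hbound : ∀ s, |t s| ≤ P) (hσ : ∀ a, |σ a| ≤ 1)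
    (ht : ∀ a, t a = P * σ a - σ (a + 1)) (a : ZMod f) (h0 : σ a ≠ 0) (h1 : σ (a + 1) ≠ 0) :
    σ (a + 1) = σ a := by
  have hb := abs_le.1 (hbound a)
  rw [ht a] at hb
  rcases Int.abs_le_one_iff.1 (hσ a) with h | h | h <;>
    rcases Int.abs_le_one_iff.1 (hσ (a + 1)) with h' | h' | h' <;>
    simp only [h, h'] at h0 h1 hb ⊢ <;> omega

def IsBlock (P : ℤ) (t : ZMod f → ℤ) (b : ZMod f) (l : ℕ) : Prop :=
  (∀ j : ℕ, j < l → t (b + (j : ZMod f)) = 0) ∨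
  (2 ≤ l ∧ ∃ ε : ℤ, (ε = 1 ∨ ε = -1) ∧ t b = -ε ∧
    t (b + ((l - 1 : ℕ) : ZMod f)) = ε * P ∧
    ∀ j : ℕ, 0 < j → j < l - 1 → t (b + (j : ZMod f)) = ε * (P - 1))

lemma exists_isBlock (hσ : ∀ a, |σ a| ≤ 1) (ht : ∀ a, t a = P * σ a - σ (a + 1))
    (hsign : ∀ a, σ a ≠ 0 → σ (a + 1) ≠ 0 → σ (a + 1) = σ a) {b : ZMod f} {k : ℕ} (hk : 0 < k)
    (hb : σ b = 0) (hbk : σ (b + k) = 0) :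
    ∃ l, 1 ≤ l ∧ l ≤ k ∧ σ (b + l) = 0 ∧ IsBlock P t b l := by
  classical
  have hex : ∃ l : ℕ, 0 < l ∧ σ (b + l) = 0 := ⟨k, hk, hbk⟩
  obtain ⟨hl, hσl⟩ := Nat.find_spec hex
  refine ⟨Nat.find hex, hl, Nat.find_min' hex ⟨hk, hbk⟩, hσl, ?_⟩
  set l := Nat.find hex
  have hsucc : ∀ j : ℕ, b + (j : ZMod f) + 1 = b + ((j + 1 : ℕ) : ZMod f) := by
    intro j
    rw [Nat.cast_succ, add_assoc]
  by_cases hl1 : l = 1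
  · left
    intro j hj
    obtain rfl : j = 0 := by omega
    simpa [ht, hb, hl1] using hσl
  right
  have hne : ∀ j, 0 < j → j < l → σ (b + j) ≠ 0 := fun j hj hjl h => Nat.find_min hex hjl ⟨hj, h⟩
  set ε := σ (b + 1)
  have hrun : ∀ j, 0 < j → j < l → σ (b + j) = ε := by
    intro j hj hjl
    obtain ⟨i, rfl⟩ : ∃ i, j = i + 1 := Nat.exists_eq_add_one.2 hj
    have hshift : ∀ m : ℕ, b + 1 + (m : ZMod f) = b + ((m + 1 : ℕ) : ZMod f) := fun m => by
      push_cast; ring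
    have hne' : ∀ m ≤ i, σ (b + 1 + m) ≠ 0 := fun m hm => by
      rw [hshift]
      exact hne (m + 1) (by omega) (by omega)
    rw [← hshift]
    exact apply_add_natCast_eq_of_forall_ne_zero hsign hne'
  refine ⟨by omega, ε, (Int.abs_le_one_iff.1 (hσ _)).resolve_left ?_, ?_, ?_, ?_⟩
  · simpa using hne 1 (by omega) (by omega)
  · rw [ht, hb]
    ring
  · rw [ht, hrun _ (by omega) (by omega), hsucc, Nat.sub_add_cancel hl, hσl]
    ring
  · intro j hj hjl
    rw [ht, hrun _ hj (by omega), hsucc, hrun _ (by omega) (by omega)]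
    ring

lemma exists_isBlockChain (hσ : ∀ a, |σ a| ≤ 1) (ht : ∀ a, t a = P * σ a - σ (a + 1))
    (hsign : ∀ a, σ a ≠ 0 → σ (a + 1) ≠ 0 → σ (a + 1) = σ a) (k : ℕ) :
    ∀ b, σ b = 0 → σ (b + k) = 0 →
      ∃ L : List ℕ, L.sum = k ∧ IsBlockChain (IsBlock P t) b L := by
  induction k using Nat.strong_induction_on with
  | _ k ih =>
    intro b hb hbk
    rcases Nat.eq_zero_or_pos k with rfl | hk
    · exact ⟨[], rfl, trivial⟩
    obtain ⟨l, hl, hlk, hσl, hblock⟩ := exists_isBlock hσ ht hsign hk hb hbk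
    obtain ⟨L, hL, hchain⟩ := ih (k - l) (by omega) (b + l) hσl
      (by rwa [add_assoc, ← Nat.cast_add, Nat.add_sub_cancel' hlk])
    exact ⟨l :: L, by rw [List.sum_cons, hL]; omega, hl, hblock, hchain⟩

end Carry

theorem stmt6_general {p f : ℕ} (hp2 : 2 < p) (hf : 1 ≤ f)
    (t : ZMod f → ℤ) (hbound : ∀ s : ZMod f, -(p : ℤ) ≤ t s ∧ t s ≤ p)
    (hcong : ((p : ℤ) ^ f - 1) ∣
      ∑ s ∈ Finset.range f, (p : ℤ) ^ (f - 1 - s) * t (s : ZMod f)) :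
    (∃ ε : ℤ, (ε = 1 ∨ ε = -1) ∧ ∀ s : ZMod f, t s = ε * ((p : ℤ) - 1)) ∨
    (∃ n : ℕ, ∃ a : Fin (n + 1) → ZMod f, ∃ ℓ : Fin (n + 1) → ℕ,
      (∀ m, 1 ≤ ℓ m) ∧ (∑ m, ℓ m = f) ∧
      (∀ m : Fin (n + 1), a (m + 1) = a m + (ℓ m : ZMod f)) ∧
      (∀ m : Fin (n + 1),
        (∀ j : ℕ, j < ℓ m → t (a m + (j : ZMod f)) = 0) ∨
        (2 ≤ ℓ m ∧ ∃ ε : ℤ, (ε = 1 ∨ ε = -1) ∧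
          t (a m) = -ε ∧
          t (a m + ((ℓ m - 1 : ℕ) : ZMod f)) = ε * p ∧
          (∀ j : ℕ, 0 < j → j < ℓ m - 1 →
            t (a m + (j : ZMod f)) = ε * ((p : ℤ) - 1))))) := by
  have : NeZero f := ⟨by omega⟩
  have hbound' : ∀ s, |t s| ≤ p := fun s => abs_le.2 (hbound s)
  obtain ⟨σ, hσ, ht⟩ := exists_carry (P := p) (by exact_mod_cast hp2) hbound'
    (by simpa [cyclicDigitSum] using hcong)
  have hsign := carry_add_one_eq_of_ne_zero hbound' hσ ht
  by_cases h0 : ∃ a₀, σ a₀ = 0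
  · right
    obtain ⟨a₀, ha₀⟩ := h0
    obtain ⟨L, hLsum, hL⟩ := exists_isBlockChain hσ ht hsign f a₀ ha₀ (by simpa using ha₀)
    obtain ⟨n, a, ℓ, hℓ, hsum, hstep, hblock⟩ :=
      hL.exists_fin (by rintro rfl; rw [List.sum_nil] at hLsum; omega) (by simp [hLsum])
    exact ⟨n, a, ℓ, hℓ, hsum.trans hLsum, hstep, hblock⟩
  · left
    push Not at h0
    have hconst : ∀ a, σ a = σ 0 := fun a => by
      simpa using apply_add_natCast_eq_of_forall_ne_zero hsign (b := 0) (k := a.val)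
        fun j _ => h0 _
    refine ⟨σ 0, (Int.abs_le_one_iff.1 (hσ 0)).resolve_left (h0 0), fun s => ?_⟩
    rw [ht, hconst s, hconst (s + 1)]
    ring

/-- Lemma 7.1 of Gee–Liu–Savitt, Lemma `solution` of the paper.
If `t : ℤ/fℤ → ℤ` takes values in `[-p, p]` and `Σ p^{f−1−s} t_s ≡ 0 (mod p^f − 1)`,
then either `t` is constantly `±(p−1)`, or the cyclic index set partitions into
consecutive cyclic intervals (the interval with index `m` starting at `a m` and of
length `ℓ m ≥ 1`, the next one starting at `a m + ℓ m`) on each of which `t` is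
identically `0` or of the form `±(−1, p−1, …, p−1, p)` (possibly with no `p−1`
entries). -/
theorem stmt6 {p f : ℕ} (hp : p.Prime) (hp2 : 2 < p) (hf : 1 ≤ f)
    (t : ZMod f → ℤ) (hbound : ∀ s : ZMod f, -(p : ℤ) ≤ t s ∧ t s ≤ p)
    (hcong : ((p : ℤ) ^ f - 1) ∣
      ∑ s ∈ Finset.range f, (p : ℤ) ^ (f - 1 - s) * t (s : ZMod f)) :
    (∃ ε : ℤ, (ε = 1 ∨ ε = -1) ∧ ∀ s : ZMod f, t s = ε * ((p : ℤ) - 1)) ∨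
    (∃ n : ℕ, ∃ a : Fin (n + 1) → ZMod f, ∃ ℓ : Fin (n + 1) → ℕ,
      (∀ m, 1 ≤ ℓ m) ∧ (∑ m, ℓ m = f) ∧
      (∀ m : Fin (n + 1), a (m + 1) = a m + (ℓ m : ZMod f)) ∧
      (∀ m : Fin (n + 1),
        (∀ j : ℕ, j < ℓ m → t (a m + (j : ZMod f)) = 0) ∨
        (2 ≤ ℓ m ∧ ∃ ε : ℤ, (ε = 1 ∨ ε = -1) ∧
          t (a m) = -ε ∧
          t (a m + ((ℓ m - 1 : ℕ) : ZMod f)) = ε * p ∧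
          (∀ j : ℕ, 0 < j → j < ℓ m - 1 →
            t (a m + (j : ZMod f)) = ε * ((p : ℤ) - 1))))) :=
  stmt6_general hp2 hf t hbound hcong
end

section
/- Let p > 2 be a prime, f ≥ 1, and fix an index s_0 ∈ {0, ..., f−1}. Let x = (x_0, ..., x_{f−1}) and y = (y_0, ..., y_{f−1}) be tuples of integers with 0 ≤ x_s ≤ p−1 and 0 ≤ y_s ≤ p−1 for all s, and with x_{s_0} ≠ p−1 and y_{s_0} ≠ p−1. If Σ_{s=0}^{f−1} p^{f−1−s} x_s ≡ Σ_{s=0}^{f−1} p^{f−1−s} y_s (mod p^f − 1), then x_s = y_s for every s. -/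
/-!
Reading `x` as the base-`p` digits of `N(x) = ∑ p^(f-1-s) x_s` (most significant first), the
all-`(p-1)` tuple has value `p^f - 1`, so a digit tuple with some digit below `p - 1` has value
strictly less than `p^f - 1`. Both sides of the congruence therefore lie in `[0, p^f - 1)` and
are equal, and uniqueness of base-`p` expansions gives `x = y`.
-/

open Finset

def ofDigitsBE (p : ℕ) {f : ℕ} (x : Fin f → ℕ) : ℕ :=
  ∑ s : Fin f, p ^ (f - 1 - (s : ℕ)) * x s

namespace ofDigitsBE

variable {p f : ℕ}

theorem succ (x : Fin (f + 1) → ℕ) :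
    ofDigitsBE p x = p * ofDigitsBE p (Fin.init x) + x (Fin.last f) := by
  have hexp : ∀ s : Fin f, p ^ (f - (s : ℕ)) = p * p ^ (f - 1 - (s : ℕ)) := fun s => by
    rw [← pow_succ']
    congr 1
    omega
  simp only [ofDigitsBE, Fin.sum_univ_castSucc, Fin.val_castSucc, Fin.val_last,
    Nat.add_sub_cancel, Nat.sub_self, pow_zero, one_mul, hexp, mul_sum, mul_assoc, Fin.init]

theorem const_sub_one : ofDigitsBE p (fun _ : Fin f => p - 1) = p ^ f - 1 := by
  induction f with
  | zero => simp [ofDigitsBE]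
  | succ f ih =>
    rw [succ]
    change p * ofDigitsBE p (fun _ : Fin f => p - 1) + (p - 1) = p ^ (f + 1) - 1
    rw [ih, Nat.mul_sub, mul_one, ← pow_succ']
    rcases Nat.eq_zero_or_pos p with rfl | hp
    · simp
    · have : p ≤ p ^ (f + 1) := by
        simpa using Nat.pow_le_pow_right hp (Nat.succ_pos f)
      omega

theorem lt_of_forall_le_of_lt (hp : 0 < p) {x y : Fin f → ℕ} (hle : ∀ s, x s ≤ y s) {s₀ : Fin f}
    (hlt : x s₀ < y s₀) : ofDigitsBE p x < ofDigitsBE p y :=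
  sum_lt_sum (fun s _ => Nat.mul_le_mul_left _ (hle s))
    ⟨s₀, mem_univ _, Nat.mul_lt_mul_of_pos_left hlt (Nat.pow_pos hp)⟩

theorem lt_pow_sub_one {x : Fin f → ℕ} (hx : ∀ s, x s ≤ p - 1) {s₀ : Fin f}
    (hs₀ : x s₀ < p - 1) : ofDigitsBE p x < p ^ f - 1 :=
  const_sub_one (p := p) ▸ lt_of_forall_le_of_lt (by omega) hx hs₀

theorem eq_of_ofDigitsBE_eq (hp : 0 < p) {x y : Fin f → ℕ} (hx : ∀ s, x s < p)
    (hy : ∀ s, y s < p) (h : ofDigitsBE p x = ofDigitsBE p y) : x = y := by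
  induction f with
  | zero => exact funext fun s => s.elim0
  | succ f ih =>
    rw [succ, succ] at h
    have hlast : x (Fin.last f) = y (Fin.last f) := by
      have := congrArg (· % p) h
      simpa only [Nat.mul_add_mod_of_lt (hx _), Nat.mul_add_mod_of_lt (hy _), mul_comm p] using this
    have hinit : Fin.init x = Fin.init y :=
      ih (fun s => hx _) (fun s => hy _) (Nat.eq_of_mul_eq_mul_left hp (by omega))
    rw [← Fin.snoc_init_self x, ← Fin.snoc_init_self y, hinit, hlast]

end ofDigitsBE

theorem stmt7_general {p f : ℕ}
    (s0 : Fin f) (x y : Fin f → ℕ)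
    (hx : ∀ s, x s ≤ p - 1) (hy : ∀ s, y s ≤ p - 1)
    (hx0 : x s0 ≠ p - 1) (hy0 : y s0 ≠ p - 1)
    (hcong : (∑ s : Fin f, p ^ (f - 1 - (s : ℕ)) * x s)
      ≡ (∑ s : Fin f, p ^ (f - 1 - (s : ℕ)) * y s) [MOD p ^ f - 1]) :
    x = y := by
  have hxlt := ofDigitsBE.lt_pow_sub_one hx (lt_of_le_of_ne (hx s0) hx0)
  have hylt := ofDigitsBE.lt_pow_sub_one hy (lt_of_le_of_ne (hy s0) hy0)
  have hp : 0 < p := by have := hx s0; omega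
  exact ofDigitsBE.eq_of_ofDigitsBE_eq hp (fun s => by have := hx s; omega)
    (fun s => by have := hy s; omega) (hcong.eq_of_lt_of_lt hxlt hylt)

/-- combinatorial core of Condition (C-1) in the paper.
If `x, y : Fin f → ℕ` take values in `[0, p−1]`, avoid `p−1` at the fixed index `s₀`,
and satisfy `Σ p^{f−1−s} x_s ≡ Σ p^{f−1−s} y_s (mod p^f − 1)`, then `x = y`. -/
theorem stmt7 {p f : ℕ} (hp : p.Prime) (hp2 : 2 < p) (hf : 1 ≤ f)
    (s0 : Fin f) (x y : Fin f → ℕ)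
    (hx : ∀ s, x s ≤ p - 1) (hy : ∀ s, y s ≤ p - 1)
    (hx0 : x s0 ≠ p - 1) (hy0 : y s0 ≠ p - 1)
    (hcong : (∑ s : Fin f, p ^ (f - 1 - (s : ℕ)) * x s)
      ≡ (∑ s : Fin f, p ^ (f - 1 - (s : ℕ)) * y s) [MOD p ^ f - 1]) :
    x = y :=
  stmt7_general s0 x y hx hy hx0 hy0 hcong
end

section
/- Let p ≥ 2 and f ≥ 1 be integers. For a tuple t = (t_0, ..., t_{f−1}) of integers, indices read modulo f, and for s ∈ ℤ/fℤ define α_s(t) = (p^f − 1)^{−1} · Σ_{j=1}^{f} p^{f−j} t_{(j+s) mod f} ∈ ℚ. Then for any two tuples t, t' ∈ ℤ^f the following are equivalent: (a) α_s(t) − α_s(t') ∈ ℤ for some s; (b) α_s(t) − α_s(t') ∈ ℤ for every s; (c) Σ_{s=0}^{f−1} p^{f−1−s} (t_s − t'_s) ≡ 0 (mod p^f − 1). Moreover, for every t and every s one has α_s(t) + t_s = p·α_{s−1}(t). -/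
open Finset

theorem ZMod.forall_of_imp_add_one {n : ℕ} [NeZero n] {P : ZMod n → Prop}
    (step : ∀ s, P s → P (s + 1)) {s₀ : ZMod n} (h₀ : P s₀) (s : ZMod n) : P s := by
  have h : ∀ k : ℕ, P (s₀ + k) := by
    intro k
    induction k with
    | zero => simpa using h₀
    | succ k ih => simpa [add_assoc] using step _ ih
  simpa using h (s - s₀).val

theorem Rat.exists_intCast_eq_div_iff_dvd {a b : ℤ} (hb : b ≠ 0) :
    (∃ n : ℤ, (a : ℚ) / b = n) ↔ b ∣ a := by
  rw [← Rat.den_div_intCast_eq_one_iff a b hb, Rat.den_eq_one_iff]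
  constructor
  · rintro ⟨n, hn⟩
    rw [hn, Rat.num_intCast]
  · exact fun h => ⟨_, h.symm⟩

section CyclicPowerSum

variable {R : Type*} [CommRing R] {f : ℕ}

def cyclicPowerSum (x : R) (u : ZMod f → R) (s : ZMod f) : R :=
  ∑ i ∈ range f, x ^ i * u (s - i)

theorem cyclicPowerSum_add_mul_self (x : R) (u : ZMod f → R) (s : ZMod f) :
    cyclicPowerSum x u s + (x ^ f - 1) * u s = x * cyclicPowerSum x u (s - 1) := by
  set g : ℕ → R := fun i => x ^ i * u (s - i)
  have hshift : x * cyclicPowerSum x u (s - 1) = ∑ i ∈ range f, g (i + 1) := by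
    simp only [g, cyclicPowerSum, mul_sum, Nat.cast_add, Nat.cast_one, pow_succ]
    exact sum_congr rfl fun i _ => by ring_nf
  have hsplit := (sum_range_succ g f).symm.trans (sum_range_succ' g f)
  simp only [g, ZMod.natCast_self, sub_zero, pow_zero, Nat.cast_zero, one_mul] at hsplit
  rw [hshift, cyclicPowerSum]
  linear_combination hsplit

theorem cyclicPowerSum_sub (x : R) (u v : ZMod f → R) (s : ZMod f) :
    cyclicPowerSum x (u - v) s = cyclicPowerSum x u s - cyclicPowerSum x v s := by
  simp only [cyclicPowerSum, Pi.sub_apply, mul_sub, sum_sub_distrib]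

theorem cyclicPowerSum_neg_one (x : R) (u : ZMod f → R) :
    cyclicPowerSum x u (-1) = ∑ i ∈ range f, x ^ (f - 1 - i) * u i := by
  rw [cyclicPowerSum, ← sum_range_reflect]
  refine sum_congr rfl fun i hi => ?_
  have hi : i < f := mem_range.mp hi
  congr 2
  rw [Nat.cast_sub (by omega), Nat.cast_sub (by omega)]
  simp

end CyclicPowerSum

section alphaQ

variable {p f : ℕ}

theorem alphaQ_eq_cyclicPowerSum_div (u : ZMod f → ℤ) (s : ZMod f) :
    alphaQ p f u s = ((cyclicPowerSum (p : ℤ) u s : ℤ) : ℚ) / ((p : ℚ) ^ f - 1) := by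
  have hreindex : ∑ j ∈ Icc 1 f, (p : ℚ) ^ (f - j) * (u (s + (j : ZMod f)) : ℚ)
      = ∑ i ∈ range f, (p : ℚ) ^ i * (u (s - i) : ℚ) := by
    refine sum_nbij' (fun j => f - j) (fun i => f - i) ?_ ?_ ?_ ?_ ?_
      <;> intro j hj <;> simp only [mem_Icc, mem_range] at hj ⊢
    any_goals omega
    rw [Nat.cast_sub hj.2, ZMod.natCast_self, zero_sub, sub_neg_eq_add]
  rw [alphaQ, hreindex, div_eq_inv_mul, cyclicPowerSum]
  push_cast
  rfl

theorem alphaQ_sub (u v : ZMod f → ℤ) (s : ZMod f) :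
    alphaQ p f (u - v) s = alphaQ p f u s - alphaQ p f v s := by
  simp only [alphaQ_eq_cyclicPowerSum_div, cyclicPowerSum_sub, Int.cast_sub, sub_div]

theorem alphaQ_add_apply_eq_mul_alphaQ_sub_one (hN : (p : ℚ) ^ f ≠ 1) (u : ZMod f → ℤ)
    (s : ZMod f) :
    alphaQ p f u s + u s = p * alphaQ p f u (s - 1) := by
  have hrec := congrArg (Int.cast : ℤ → ℚ) (cyclicPowerSum_add_mul_self (p : ℤ) u s)
  push_cast at hrec
  rw [alphaQ_eq_cyclicPowerSum_div, alphaQ_eq_cyclicPowerSum_div]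
  field_simp [sub_ne_zero.mpr hN]
  linear_combination hrec

theorem alphaQ_add_one_isInt (hN : (p : ℚ) ^ f ≠ 1) (u : ZMod f → ℤ) {s : ZMod f}
    (h : ∃ n : ℤ, alphaQ p f u s = n) : ∃ n : ℤ, alphaQ p f u (s + 1) = n := by
  obtain ⟨n, hn⟩ := h
  refine ⟨p * n - u (s + 1), ?_⟩
  have hrec := alphaQ_add_apply_eq_mul_alphaQ_sub_one hN u (s + 1)
  rw [add_sub_cancel_right, hn] at hrec
  push_cast
  linear_combination hrec

theorem alphaQ_neg_one_isInt_iff (hN : (p : ℤ) ^ f - 1 ≠ 0) (u : ZMod f → ℤ) :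
    (∃ n : ℤ, alphaQ p f u (-1) = n) ↔
      (p : ℤ) ^ f - 1 ∣ ∑ i ∈ range f, (p : ℤ) ^ (f - 1 - i) * u i := by
  rw [← Rat.exists_intCast_eq_div_iff_dvd hN, alphaQ_eq_cyclicPowerSum_div, cyclicPowerSum_neg_one]
  push_cast
  rfl

end alphaQ

/-- arithmetic content of Lemma `comparerank1` of the paper.
For tuples `t, t' : ℤ/fℤ → ℤ`, the conditions (a) `α_s(t) − α_s(t') ∈ ℤ` for some `s`,
(b) the same for every `s`, and (c) `p^f − 1 ∣ Σ p^{f−1−s}(t_s − t'_s)` are equivalent;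
moreover `α_s(t) + t_s = p · α_{s−1}(t)` always. -/
theorem stmt8 {p f : ℕ} (hp : 2 ≤ p) (hf : 1 ≤ f) (t t' : ZMod f → ℤ) :
    (((∃ s : ZMod f, ∃ n : ℤ, alphaQ p f t s - alphaQ p f t' s = n) ↔
      (∀ s : ZMod f, ∃ n : ℤ, alphaQ p f t s - alphaQ p f t' s = n)) ∧
     ((∀ s : ZMod f, ∃ n : ℤ, alphaQ p f t s - alphaQ p f t' s = n) ↔
      ((p : ℤ) ^ f - 1 ∣
        ∑ s ∈ Finset.range f, (p : ℤ) ^ (f - 1 - s) * (t (s : ZMod f) - t' (s : ZMod f))))) ∧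
    (∀ (u : ZMod f → ℤ) (s : ZMod f),
      alphaQ p f u s + (u s : ℚ) = (p : ℚ) * alphaQ p f u (s - 1)) := by
  have : NeZero f := ⟨by omega⟩
  have hpow : 1 < (p : ℤ) ^ f := one_lt_pow₀ (by exact_mod_cast hp) (by omega)
  have hNℚ : (p : ℚ) ^ f ≠ 1 := by exact_mod_cast hpow.ne'
  have hN : (p : ℤ) ^ f - 1 ≠ 0 := by omega
  simp only [← alphaQ_sub]
  have hcycle : (∃ s : ZMod f, ∃ n : ℤ, alphaQ p f (t - t') s = n) ↔
      ∀ s : ZMod f, ∃ n : ℤ, alphaQ p f (t - t') s = n :=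
    ⟨fun ⟨_, h₀⟩ => ZMod.forall_of_imp_add_one (fun _ => alphaQ_add_one_isInt hNℚ _) h₀,
      fun h => ⟨0, h 0⟩⟩
  refine ⟨⟨hcycle, ?_⟩, alphaQ_add_apply_eq_mul_alphaQ_sub_one hNℚ⟩
  have hc := alphaQ_neg_one_isInt_iff hN (t - t')
  simp only [Pi.sub_apply] at hc
  exact ⟨fun h => hc.mp (h (-1)), fun h => hcycle.mp ⟨-1, hc.mpr h⟩⟩
end
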